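/- arXiv:2401.03496 — 8 statements merged into one kernel-verified Lean document; each statement's English description precedes it below -/
import Mathlib

section
/- For every finite connected simple graph G on n vertices, the cooling number satisfies CL(G) ≤ ⌈(n+1)/2⌉. -/
/-- A cooling sequence for `G`: a sequence `v : Fin k → V` of sources (the `i`-th source,
0-based, is chosen in round `i + 1`) such that each source is uncooled when chosen
(`dist (v i) (v j) > j - i` for `i < j` in 1-based indexing), and the sequence cannot be
extended: every vertex is cooled by the end of round `k + 1`. -/
def IsCoolingSeq {V : Type*} (G : SimpleGraph V) {k : ℕ} (v : Fin k → V) : Prop :=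
  (∀ i j : Fin k, i < j → (j : ℕ) - (i : ℕ) < G.dist (v i) (v j)) ∧
  (∀ u : V, ∃ i : Fin k, (i : ℕ) + 1 + G.dist (v i) u ≤ k + 1)

/-- The round in which the cooling process with sources `v` ends: the maximum over
vertices `u` of the first round in which `u` is cooled, `min_i (i + dist (v i) u)`
(1-based `i`). -/
noncomputable def coolTime {V : Type*} [Fintype V] (G : SimpleGraph V) {k : ℕ}
    (v : Fin k → V) : ℕ :=
  Finset.univ.sup fun u : V => sInf {m : ℕ | ∃ i : Fin k, m = (i : ℕ) + 1 + G.dist (v i) u}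

/-- The cooling number of `G`: the maximum, over all cooling sequences of `G`, of the
round in which the cooling process ends. -/
noncomputable def coolingNumber {V : Type*} [Fintype V] (G : SimpleGraph V) : ℕ :=
  sSup {T : ℕ | ∃ (k : ℕ) (v : Fin k → V), IsCoolingSeq G v ∧ T = coolTime G v}

/-- Along any walk from inside a set to outside it, there is an edge crossing the set. -/
theorem exists_adj_cross {V : Type*} {G : SimpleGraph V} (A : Set V) :
    ∀ {a b : V}, G.Walk a b → a ∈ A → b ∉ A →
      ∃ x y, G.Adj x y ∧ x ∈ A ∧ y ∉ A := by
  intro a b p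
  induction p with
  | nil => intro ha hb; exact (hb ha).elim
  | @cons u x c h p ih =>
    intro ha hb
    by_cases hx : x ∈ A
    · exact ih hx hb
    · exact ⟨u, x, h, ha, hx⟩

/-- For every finite connected simple graph `G` on `n` vertices,
`CL(G) ≤ ⌈(n + 1) / 2⌉`. -/
theorem coolingNumber_le_half_order {V : Type*} [Fintype V] (G : SimpleGraph V)
    (hG : G.Connected) :
    coolingNumber G ≤ (Fintype.card V + 1 + 1) / 2 := by
  classical
  apply csSup_le'
  rintro T ⟨k, v, ⟨hsep, hcov⟩, rfl⟩
  have hV : Nonempty V := hG.nonempty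
  set c : V → ℕ := fun u => sInf {m : ℕ | ∃ i : Fin k, m = (i : ℕ) + 1 + G.dist (v i) u}
    with hcdef
  have hct : coolTime G v = Finset.univ.sup c := rfl
  have hk : 0 < k := by
    obtain ⟨i, -⟩ := hcov (Classical.arbitrary V); exact i.pos
  have cne : ∀ u : V, {m : ℕ | ∃ i : Fin k, m = (i : ℕ) + 1 + G.dist (v i) u}.Nonempty :=
    fun u => ⟨_, ⟨⟨0, hk⟩, rfl⟩⟩
  have cmem : ∀ u : V, ∃ i : Fin k, c u = (i : ℕ) + 1 + G.dist (v i) u :=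
    fun u => Nat.sInf_mem (cne u)
  have cle : ∀ (u : V) (i : Fin k), c u ≤ (i : ℕ) + 1 + G.dist (v i) u :=
    fun u i => Nat.sInf_le ⟨i, rfl⟩
  have csrc : ∀ j : Fin k, c (v j) = (j : ℕ) + 1 := by
    intro j
    refine le_antisymm ?_ ?_
    · have := cle (v j) j
      simpa [SimpleGraph.dist_self] using this
    · obtain ⟨i, h⟩ := cmem (v j)
      rcases lt_trichotomy i j with hij | hij | hij
      · have h2 := hsep i j hij
        have h3 : (i : ℕ) < (j : ℕ) := hij
        omega
      · subst hij
        simp only [SimpleGraph.dist_self] at h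
        omega
      · have h3 : (j : ℕ) < (i : ℕ) := hij
        omega
  -- the last vertex
  obtain ⟨u₀, -, hTu⟩ := Finset.exists_mem_eq_sup Finset.univ Finset.univ_nonempty c
  set T : ℕ := Finset.univ.sup c with hTdef
  rw [hct]
  have hTk : T ≤ k + 1 := by
    obtain ⟨i, hi⟩ := hcov u₀
    have := cle u₀ i
    omega
  by_cases hT2 : T < 2
  · have : 1 * 2 ≤ Fintype.card V + 1 + 1 := by omega
    have h1 := Nat.le_div_iff_mul_le (k := 2) (by norm_num) |>.mpr this
    omega
  push_neg at hT2
  -- the level sets of c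
  set S : ℕ → Finset V := fun t => Finset.univ.filter (fun u => c u = t) with hSdef
  have hS1 : 1 ≤ (S 1).card := by
    refine Finset.card_pos.mpr ⟨v ⟨0, hk⟩, ?_⟩
    simp [hSdef, csrc ⟨0, hk⟩]
  have hST : 1 ≤ (S T).card := by
    refine Finset.card_pos.mpr ⟨u₀, ?_⟩
    simp [hSdef, hTu.symm]
  have hmid : ∀ t : ℕ, 2 ≤ t → t ≤ T - 1 → 2 ≤ (S t).card := by
    intro t ht2 htT
    have htk : t - 1 < k := by omega
    set j : Fin k := ⟨t - 1, htk⟩ with hjdef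
    have hvj : v j ∈ S t := by
      simp only [hSdef, Finset.mem_filter, Finset.mem_univ, true_and]
      rw [csrc j]
      simp [hjdef]
      omega
    -- boundary vertex
    set A : Set V := {y | c y ≤ t - 1} with hAdef
    have ha : v ⟨0, hk⟩ ∈ A := by
      simp only [hAdef, Set.mem_setOf_eq, csrc ⟨0, hk⟩]
      omega
    have hb : u₀ ∉ A := by
      simp only [hAdef, Set.mem_setOf_eq, ← hTu]
      omega
    obtain ⟨p⟩ := hG.preconnected (v ⟨0, hk⟩) u₀
    obtain ⟨x, w, hadj, hxA, hwA⟩ := exists_adj_cross A p ha hb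
    simp only [hAdef, Set.mem_setOf_eq] at hxA hwA
    obtain ⟨i, hix⟩ := cmem x
    have hd1 : G.dist x w ≤ 1 := by
      have := SimpleGraph.dist_le (SimpleGraph.Walk.cons hadj SimpleGraph.Walk.nil)
      simpa using this
    have htri : G.dist (v i) w ≤ G.dist (v i) x + G.dist x w := hG.dist_triangle
    have hub : (i : ℕ) + 1 + G.dist (v i) w ≤ t := by omega
    have hcw : c w = t := by
      have h1 : c w ≤ t := le_trans (cle w i) hub
      omega
    have hiv : (i : ℕ) < t - 1 := by omega
    have hne : w ≠ v j := by
      intro heq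
      have hij : i < j := by
        rw [Fin.lt_def]
        simpa [hjdef] using hiv
      have h2 := hsep i j hij
      rw [← heq] at h2
      simp only [hjdef] at h2
      omega
    have hw : w ∈ S t := by
      simp [hSdef, hcw]
    exact Finset.one_lt_card.mpr ⟨v j, hvj, w, hw, hne.symm⟩
  -- counting
  have hdisj : ∀ a ∈ Finset.Icc 1 T, ∀ b ∈ Finset.Icc 1 T, a ≠ b → Disjoint (S a) (S b) := by
    intro a _ b _ hab
    rw [Finset.disjoint_left]
    intro u hua hub
    simp only [hSdef, Finset.mem_filter] at hua hub
    exact hab (hua.2 ▸ hub.2 ▸ rfl)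
  have hsum : ∑ t ∈ Finset.Icc 1 T, (S t).card ≤ Fintype.card V := by
    rw [← Finset.card_biUnion hdisj]
    simpa using Finset.card_le_univ _
  have hsplit : Finset.Icc 1 T = insert 1 (insert T (Finset.Icc 2 (T - 1))) := by
    ext x
    simp only [Finset.mem_Icc, Finset.mem_insert]
    omega
  have h1n : (1 : ℕ) ∉ insert T (Finset.Icc 2 (T - 1)) := by
    simp only [Finset.mem_insert, Finset.mem_Icc]
    omega
  have hTn : T ∉ Finset.Icc 2 (T - 1) := by
    simp only [Finset.mem_Icc]
    omega
  rw [hsplit, Finset.sum_insert h1n, Finset.sum_insert hTn] at hsum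
  have hmidsum : 2 * (T - 2) ≤ ∑ t ∈ Finset.Icc 2 (T - 1), (S t).card := by
    calc 2 * (T - 2) = ∑ _t ∈ Finset.Icc 2 (T - 1), 2 := by
          rw [Finset.sum_const, Nat.card_Icc, smul_eq_mul]
          omega
      _ ≤ _ := Finset.sum_le_sum fun t ht => by
          simp only [Finset.mem_Icc] at ht
          exact hmid t ht.1 ht.2
  have hfinal : 2 * T - 2 ≤ Fintype.card V := by omega
  rw [Nat.le_div_iff_mul_le (by norm_num : 0 < 2)]
  omega
end

section
/- For every finite connected simple graph G, the cooling number satisfies CL(G) ≥ ⌈(diam(G)+2)/2⌉, where diam(G) is the diameter of G. -/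
/-- The diameter of `G`: the maximum of `dist u v` over all pairs of vertices. -/
noncomputable def graphDiam {V : Type*} [Fintype V] (G : SimpleGraph V) : ℕ :=
  Finset.univ.sup fun p : V × V => G.dist p.1 p.2

section
variable {V : Type*} {G : SimpleGraph V}

lemma cond1_inj {k : ℕ} {v : Fin k → V}
    (h : ∀ i j : Fin k, i < j → (j : ℕ) - (i : ℕ) < G.dist (v i) (v j)) :
    Function.Injective v := by
  intro i j hij
  by_contra hne
  rcases lt_or_gt_of_ne (fun e : i = j => hne e) with hlt | hlt
  · have := h i j hlt
    rw [hij, SimpleGraph.dist_self] at this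
    have : (i : ℕ) < (j : ℕ) := hlt
    omega
  · have := h j i hlt
    rw [hij.symm, SimpleGraph.dist_self] at this
    have : (j : ℕ) < (i : ℕ) := hlt
    omega

lemma exists_dist_between (hG : G.Connected) (a b : V) :
    ∀ t, t ≤ G.dist a b → ∃ c, G.dist a c = t ∧ G.dist c b = G.dist a b - t := by
  intro t
  induction t with
  | zero => exact fun _ => ⟨a, by simp [SimpleGraph.dist_self]⟩
  | succ t ih =>
    intro ht
    obtain ⟨c, hac, hcb⟩ := ih (by omega)
    obtain ⟨p, hp⟩ := hG.exists_walk_length_eq_dist c b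
    have hplen : 0 < p.length := by omega
    have hnil : ¬ p.Nil := by rw [SimpleGraph.Walk.not_nil_iff_lt_length]; exact hplen
    have hadj : G.Adj c (p.getVert 1) := by
      have := p.adj_getVert_succ (i := 0) hplen
      simpa using this
    have hd1 : G.dist c (p.getVert 1) = 1 := SimpleGraph.dist_eq_one_iff_adj.mpr hadj
    have h1 : G.dist (p.getVert 1) b ≤ p.tail.length := G.dist_le p.tail
    have hl : p.tail.length + 1 = p.length := SimpleGraph.Walk.length_tail_add_one hnil
    have h2 : G.dist a (p.getVert 1) ≤ G.dist a c + G.dist c (p.getVert 1) :=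
      hG.dist_triangle
    have h3 : G.dist a b ≤ G.dist a (p.getVert 1) + G.dist (p.getVert 1) b :=
      hG.dist_triangle
    exact ⟨p.getVert 1, by omega, by omega⟩

end

section
variable {V : Type*} {G : SimpleGraph V}

lemma exists_cooling_ext [Fintype V] (G : SimpleGraph V) :
    ∀ (n k : ℕ) (v : Fin k → V), Fintype.card V - k ≤ n →
    (∀ i j : Fin k, i < j → (j : ℕ) - (i : ℕ) < G.dist (v i) (v j)) →
    ∃ (k' : ℕ) (w : Fin k' → V), IsCoolingSeq G w ∧ k ≤ k' ∧
      ∀ (i : ℕ) (hi : i < k) (hi' : i < k'), w ⟨i, hi'⟩ = v ⟨i, hi⟩ := by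
  intro n
  induction n with
  | zero =>
    intro k v hn h1
    by_cases h2 : ∀ u : V, ∃ i : Fin k, (i : ℕ) + 1 + G.dist (v i) u ≤ k + 1
    · exact ⟨k, v, ⟨h1, h2⟩, le_refl k, fun i hi hi' => rfl⟩
    · exfalso
      push_neg at h2
      obtain ⟨u, hu⟩ := h2
      set w : Fin (k+1) → V := fun i => if h : (i : ℕ) < k then v ⟨i, h⟩ else u with hw
      have h1' : ∀ i j : Fin (k+1), i < j → (j : ℕ) - (i : ℕ) < G.dist (w i) (w j) := by
        intro i j hij
        have hij' : (i : ℕ) < (j : ℕ) := hij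
        by_cases hj : (j : ℕ) < k
        · have hi : (i : ℕ) < k := by omega
          simp only [hw, hi, hj, dif_pos]
          exact h1 ⟨i, hi⟩ ⟨j, hj⟩ hij'
        · have hi : (i : ℕ) < k := by omega
          have hjk : (j : ℕ) = k := by omega
          have := hu ⟨i, hi⟩
          simp only [hw, hi, dif_pos, hj, dif_neg, not_false_iff]
          simp only [Fin.val_mk] at this ⊢
          omega
      have hinj := cond1_inj h1'
      have hcard : k + 1 ≤ Fintype.card V := by
        simpa using Fintype.card_le_of_injective w hinj
      omega
  | succ n ih =>
    intro k v hn h1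
    by_cases h2 : ∀ u : V, ∃ i : Fin k, (i : ℕ) + 1 + G.dist (v i) u ≤ k + 1
    · exact ⟨k, v, ⟨h1, h2⟩, le_refl k, fun i hi hi' => rfl⟩
    · push_neg at h2
      obtain ⟨u, hu⟩ := h2
      set w : Fin (k+1) → V := fun i => if h : (i : ℕ) < k then v ⟨i, h⟩ else u with hw
      have h1' : ∀ i j : Fin (k+1), i < j → (j : ℕ) - (i : ℕ) < G.dist (w i) (w j) := by
        intro i j hij
        have hij' : (i : ℕ) < (j : ℕ) := hij
        by_cases hj : (j : ℕ) < k
        · have hi : (i : ℕ) < k := by omega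
          simp only [hw, hi, hj, dif_pos]
          exact h1 ⟨i, hi⟩ ⟨j, hj⟩ hij'
        · have hi : (i : ℕ) < k := by omega
          have hjk : (j : ℕ) = k := by omega
          have := hu ⟨i, hi⟩
          simp only [hw, hi, dif_pos, hj, dif_neg, not_false_iff]
          simp only [Fin.val_mk] at this ⊢
          omega
      obtain ⟨k', w', hcs, hk', hpre⟩ := ih (k+1) w (by omega) h1'
      refine ⟨k', w', hcs, by omega, fun i hi hi' => ?_⟩
      rw [hpre i (by omega) hi']
      simp only [hw, hi, dif_pos]
end

/-- For every finite connected simple graph `G`, `CL(G) ≥ ⌈(diam(G) + 2) / 2⌉`. -/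
theorem coolingNumber_ge_half_diam {V : Type*} [Fintype V] (G : SimpleGraph V)
    (hG : G.Connected) :
    (graphDiam G + 2 + 1) / 2 ≤ coolingNumber G := by
  have hne : Nonempty V := hG.nonempty
  set D := graphDiam G with hDdef
  -- a diametral pair
  obtain ⟨p, -, hp⟩ := Finset.exists_mem_eq_sup (Finset.univ : Finset (V × V))
    Finset.univ_nonempty (fun p : V × V => G.dist p.1 p.2)
  set a := p.1
  set b := p.2
  have hD : D = G.dist a b := hp
  -- geodesic sources spaced by 2
  set m := D / 2 + 1 with hm
  have hc : ∀ i : Fin m, ∃ c, G.dist a c = 2 * (i : ℕ) ∧ G.dist c b = G.dist a b - 2 * (i : ℕ) := by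
    intro i
    have hi : (i : ℕ) < m := i.isLt
    exact exists_dist_between hG a b (2 * (i : ℕ)) (by omega)
  choose c hc1 hc2 using hc
  have hcond1 : ∀ i j : Fin m, i < j → (j : ℕ) - (i : ℕ) < G.dist (c i) (c j) := by
    intro i j hij
    have hij' : (i : ℕ) < (j : ℕ) := hij
    have htri : G.dist a (c j) ≤ G.dist a (c i) + G.dist (c i) (c j) := hG.dist_triangle
    have h1 := hc1 i
    have h2 := hc1 j
    omega
  obtain ⟨k', w, hw, hk', hpre⟩ := exists_cooling_ext G (Fintype.card V) m c
    (by omega) hcond1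
  -- every cooling element for b is ≥ (D+3)/2
  have hb : ∀ x ∈ {x : ℕ | ∃ i : Fin k', x = (i : ℕ) + 1 + G.dist (w i) b},
      (D + 2 + 1) / 2 ≤ x := by
    rintro x ⟨i, rfl⟩
    by_cases hi : (i : ℕ) < m
    · have := hpre i hi i.isLt
      have heq : w i = c ⟨i, hi⟩ := by
        rw [← this]
      rw [heq]
      have h2 := hc2 ⟨i, hi⟩
      have h1 := hc1 ⟨i, hi⟩
      simp only [Fin.val_mk] at h1 h2
      have h3 : G.dist a (c ⟨i, hi⟩) + G.dist (c ⟨i, hi⟩) b = G.dist a b ∨ True := Or.inr trivial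
      rw [← hD] at h2
      -- dist (c) b = D - 2i  with 2i ≤ D
      omega
    · -- i ≥ m, so round ≥ m+1 ≥ (D+3)/2
      omega
  have hbne : {x : ℕ | ∃ i : Fin k', x = (i : ℕ) + 1 + G.dist (w i) b}.Nonempty := by
    have h0 : 0 < k' := by omega
    exact ⟨((⟨0, h0⟩ : Fin k') : ℕ) + 1 + G.dist (w ⟨0, h0⟩) b, ⟨⟨0, h0⟩, rfl⟩⟩
  have hinf : (D + 2 + 1) / 2 ≤ sInf {x : ℕ | ∃ i : Fin k', x = (i : ℕ) + 1 + G.dist (w i) b} :=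
    le_csInf hbne hb
  have hct : (D + 2 + 1) / 2 ≤ coolTime G w := by
    exact le_trans hinf (Finset.le_sup
      (f := fun u : V => sInf {x : ℕ | ∃ i : Fin k', x = (i : ℕ) + 1 + G.dist (w i) u})
      (Finset.mem_univ b))
  -- coolTime G w ≤ coolingNumber G
  have hbdd : BddAbove {T : ℕ | ∃ (k : ℕ) (v : Fin k → V), IsCoolingSeq G v ∧ T = coolTime G v} := by
    refine ⟨Fintype.card V + 1, ?_⟩
    rintro T ⟨k, v, ⟨h1, h2⟩, rfl⟩
    have hk : k ≤ Fintype.card V := by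
      simpa using Fintype.card_le_of_injective v (cond1_inj h1)
    refine Finset.sup_le fun u _ => ?_
    obtain ⟨i, hi⟩ := h2 u
    have hmem : (i : ℕ) + 1 + G.dist (v i) u ∈
        {x : ℕ | ∃ j : Fin k, x = (j : ℕ) + 1 + G.dist (v j) u} := ⟨i, rfl⟩
    calc sInf {x : ℕ | ∃ j : Fin k, x = (j : ℕ) + 1 + G.dist (v j) u}
        ≤ (i : ℕ) + 1 + G.dist (v i) u := Nat.sInf_le hmem
      _ ≤ k + 1 := hi
      _ ≤ Fintype.card V + 1 := by omega
  have hmem : coolTime G w ∈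
      {T : ℕ | ∃ (k : ℕ) (v : Fin k → V), IsCoolingSeq G v ∧ T = coolTime G v} :=
    ⟨k', w, hw, rfl⟩
  exact le_trans hct (le_csSup hbdd hmem)
end

section
/- For every n ≥ 1, the cooling number of the path P_n on n vertices equals ⌈(n+1)/2⌉. -/
open SimpleGraph Finset

section Aux

lemma natDist_cast (a b : ℕ) : (Nat.dist a b : ℤ) = |(a : ℤ) - b| := by
  rcases le_total a b with h | h
  · rw [Nat.dist_eq_sub_of_le h, abs_sub_comm, abs_of_nonneg (by omega)]; omega
  · rw [Nat.dist_eq_sub_of_le_right h, abs_of_nonneg (by omega)]; omega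

lemma pathGraph_adj_natDist {n : ℕ} {a b : Fin n} (h : (pathGraph n).Adj a b) :
    Nat.dist a.1 b.1 = 1 := by
  rw [pathGraph_adj] at h
  rcases h with h | h <;> simp [Nat.dist] <;> omega

lemma pathGraph_walk_le {n : ℕ} {a b : Fin n} (w : (pathGraph n).Walk a b) :
    Nat.dist a.1 b.1 ≤ w.length := by
  induction w with
  | nil => simp
  | cons h p ih =>
    calc Nat.dist _ _ ≤ _ + _ := Nat.dist.triangle_inequality _ _ _
    _ ≤ 1 + p.length := by rw [pathGraph_adj_natDist h]; omega
    _ = _ := by simp [Nat.add_comm]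

lemma pathGraph_dist_le {n : ℕ} (d : ℕ) (a b : Fin n) (h : a.1 + d = b.1) :
    (pathGraph n).dist a b ≤ d := by
  induction d generalizing a with
  | zero => have : a = b := Fin.ext (by omega); simp [this]
  | succ d ih =>
    obtain ⟨m, rfl⟩ : ∃ m, n = m + 1 := ⟨n - 1, by omega⟩
    have hb := b.2
    have ha1 : a.1 + 1 < m + 1 := by omega
    set a' : Fin (m+1) := ⟨a.1 + 1, ha1⟩ with ha'
    have hadj : (pathGraph (m+1)).Adj a a' := by rw [pathGraph_adj]; left; rfl
    calc (pathGraph (m+1)).dist a b ≤ (pathGraph (m+1)).dist a a' + (pathGraph (m+1)).dist a' b :=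
          (pathGraph_connected m).dist_triangle
      _ ≤ 1 + d := by
          have h1 : (pathGraph (m+1)).dist a a' = 1 := dist_eq_one_iff_adj.mpr hadj
          have h2 := ih a' (by simp [ha']; omega)
          omega
      _ = d + 1 := by omega

lemma pathGraph_dist {n : ℕ} (a b : Fin n) :
    (pathGraph n).dist a b = Nat.dist a.1 b.1 := by
  obtain ⟨m, rfl⟩ : ∃ m, n = m + 1 := ⟨n - 1, by have := a.2; omega⟩
  apply le_antisymm
  · rcases le_total a.1 b.1 with h | h
    · exact pathGraph_dist_le _ a b (by rw [Nat.dist_eq_sub_of_le h]; omega)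
    · rw [SimpleGraph.dist_comm, Nat.dist_comm]
      exact pathGraph_dist_le _ b a (by rw [Nat.dist_eq_sub_of_le h]; omega)
  · obtain ⟨w, hw⟩ := ((pathGraph_connected m) a b).exists_walk_length_eq_dist
    calc Nat.dist a.1 b.1 ≤ w.length := pathGraph_walk_le w
    _ = _ := hw

/-- Key packing lemma: if `u` is first cooled at time `T` with minimal witness `istar`,
then `2T-3 ≤ b - a` where all points live in `Icc a b`. Oriented version: `x istar ≤ u`. -/
lemma cooling_pack (T istar : ℕ) (hT : 2 ≤ T) (histar : istar ≤ T - 1)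
    (x : ℕ → ℤ) (u a b : ℤ)
    (hx : ∀ j, j < T - 1 ∨ j = istar → a ≤ x j ∧ x j ≤ b)
    (hu : a ≤ u ∧ u ≤ b)
    (h1 : ∀ i j, i < j → (j < T - 1 ∨ j = istar) → (j : ℤ) - i + 1 ≤ |x i - x j|)
    (h2 : ∀ j, j < istar → (T : ℤ) - j ≤ |x j - u|)
    (h3 : ∀ j, istar ≤ j → j < T - 1 → (T : ℤ) - 1 - j ≤ |x j - u|)
    (h4 : x istar ≤ u) (h4' : u - x istar = (T : ℤ) - 1 - istar) :
    2 * (T : ℤ) - 3 ≤ b - a := by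
  classical
  -- interval pieces
  set I : ℕ → Finset ℤ := fun j =>
    if j < istar then
      (if x j < u then Finset.Icc (x j) (x j + 1) else Finset.Icc (x j - 1) (x j))
    else Finset.Icc (x j) (x j) with hI
  set J : Finset ℤ := Finset.Icc (x istar + 1) u with hJ
  -- side facts for j < istar
  have hside : ∀ j, j < istar → (x j + 1 ≤ x istar - 1 ∧ x j < u) ∨ (u + 2 ≤ x j ∧ ¬ x j < u) := by
    intro j hj
    have habs := h2 j hj
    have hg := h1 j istar hj (Or.inr rfl)
    rcases le_abs.mp habs with h | h
    · right
      constructor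
      · omega
      · omega
    · left
      rcases le_abs.mp hg with hg' | hg' <;> omega
  -- pairwise disjointness of the I j
  have hdisj : ∀ j ∈ Finset.range (T-1), ∀ j' ∈ Finset.range (T-1), j ≠ j' →
      Disjoint (I j) (I j') := by
    have key : ∀ j j', j < T - 1 → j' < T - 1 → j < j' → Disjoint (I j) (I j') := by
      intro j j' hjT hj'T hlt
      have hg := h1 j j' hlt (Or.inl hj'T)
      have hg' := le_abs.mp hg
      rw [Finset.disjoint_left]
      intro z hz hz'
      simp only [hI] at hz hz'
      by_cases c1 : j < istar <;> by_cases c2 : j' < istar <;>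
        simp only [c1, c2, if_true, if_false] at hz hz'
      · rcases hside j c1 with ⟨hs, hc⟩ | ⟨hs, hc⟩ <;>
          rcases hside j' c2 with ⟨hs', hc'⟩ | ⟨hs', hc'⟩ <;>
          simp only [hc, hc', if_true, if_false, Finset.mem_Icc] at hz hz' <;> omega
      · rcases hside j c1 with ⟨hs, hc⟩ | ⟨hs, hc⟩ <;>
          simp only [hc, if_true, if_false, Finset.mem_Icc] at hz hz' <;> omega
      · rcases hside j' c2 with ⟨hs', hc'⟩ | ⟨hs', hc'⟩ <;>
          simp only [hc', if_true, if_false, Finset.mem_Icc] at hz hz' <;> omega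
      · simp only [Finset.mem_Icc] at hz hz'; omega
    intro j hj j' hj' hne
    simp only [Finset.mem_range] at hj hj'
    rcases Nat.lt_or_ge j j' with h | h
    · exact key j j' hj hj' h
    · exact (key j' j hj' hj (by omega)).symm
  -- J is disjoint from the biUnion
  have hJdisj : Disjoint ((Finset.range (T-1)).biUnion I) J := by
    rw [Finset.disjoint_left]
    intro z hz hzJ
    simp only [Finset.mem_biUnion, Finset.mem_range] at hz
    obtain ⟨j, hjT, hzj⟩ := hz
    simp only [hJ, Finset.mem_Icc] at hzJ
    simp only [hI] at hzj
    by_cases c1 : j < istar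
    · rcases hside j c1 with ⟨hs, hc⟩ | ⟨hs, hc⟩ <;>
        simp only [c1, hc, if_true, if_false, Finset.mem_Icc] at hzj <;> omega
    · simp only [c1, if_false, Finset.mem_Icc] at hzj
      -- z = x j, istar ≤ j < T-1 : use h3 and h1
      have h3' := h3 j (by omega) hjT
      rcases Nat.eq_or_lt_of_le (Nat.le_of_not_lt c1) with he | hlt
    -- istar = j
      · subst he; omega
      · have hg := h1 istar j hlt (Or.inl hjT)
        rcases le_abs.mp hg with hg' | hg' <;> rcases le_abs.mp h3' with h3'' | h3'' <;>
          push_cast at * <;> omega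
  -- cardinalities
  have hcardI : ∀ j, j < T - 1 → (I j).card = if j < istar then 2 else 1 := by
    intro j hj
    simp only [hI]
    by_cases c1 : j < istar
    · rcases hside j c1 with ⟨hs, hc⟩ | ⟨hs, hc⟩ <;>
        simp [c1, hc, Int.card_Icc] <;> omega
    · simp [c1, Int.card_Icc]
  have hcardJ : (J : Finset ℤ).card = T - 1 - istar := by
    simp only [hJ, Int.card_Icc]
    omega
  have hsum : ((Finset.range (T-1)).biUnion I ∪ J).card = 2 * T - 2 := by
    rw [Finset.card_union_of_disjoint hJdisj, Finset.card_biUnion hdisj]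
    have : ∑ j ∈ Finset.range (T-1), (I j).card
        = ∑ j ∈ Finset.range (T-1), (if j < istar then 2 else 1) := by
      apply Finset.sum_congr rfl
      intro j hj
      exact hcardI j (Finset.mem_range.mp hj)
    rw [this, hcardJ]
    have : ∑ j ∈ Finset.range (T-1), (if j < istar then 2 else 1)
        = (T - 1) + istar := by
      rw [Finset.sum_ite]
      simp only [Finset.sum_const, smul_eq_mul]
      have hf1 : (Finset.range (T-1)).filter (fun j => j < istar) = Finset.range istar := by
        ext z; simp only [Finset.mem_filter, Finset.mem_range]; omega
      have hf2 : ((Finset.range (T-1)).filter (fun j => ¬ j < istar)).card = T - 1 - istar := by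
        rw [Finset.filter_not, Finset.card_sdiff_of_subset (Finset.filter_subset _ _), hf1]
        simp
      rw [hf1, hf2]
      simp; omega
    rw [this]; omega
  -- containment
  have hsub : ((Finset.range (T-1)).biUnion I ∪ J) ⊆ Finset.Icc a b := by
    intro z hz
    simp only [Finset.mem_union, Finset.mem_biUnion, Finset.mem_range] at hz
    rw [Finset.mem_Icc]
    rcases hz with ⟨j, hjT, hzj⟩ | hzJ
    · have hxj := hx j (Or.inl hjT)
      have hxi := hx istar (Or.inr rfl)
      simp only [hI] at hzj
      by_cases c1 : j < istar
      · rcases hside j c1 with ⟨hs, hc⟩ | ⟨hs, hc⟩ <;>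
          simp only [c1, hc, if_true, if_false, Finset.mem_Icc] at hzj <;> omega
      · simp only [c1, if_false, Finset.mem_Icc] at hzj; omega
    · have hxi := hx istar (Or.inr rfl)
      simp only [hJ, Finset.mem_Icc] at hzJ
      omega
  have := Finset.card_le_card hsub
  rw [hsum, Int.card_Icc] at this
  omega

end Aux

lemma coolTime_le_path {n k : ℕ} (hn : 1 ≤ n) (v : Fin k → Fin n)
    (hv : IsCoolingSeq (SimpleGraph.pathGraph n) v) :
    coolTime (SimpleGraph.pathGraph n) v ≤ (n + 2) / 2 := by
  classical
  apply Finset.sup_le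
  intro u _
  obtain ⟨i1, hi1⟩ := hv.2 u
  have hne : {m : ℕ | ∃ i : Fin k, m = (i : ℕ) + 1 + (pathGraph n).dist (v i) u}.Nonempty :=
    ⟨_, ⟨i1, rfl⟩⟩
  set T := sInf {m : ℕ | ∃ i : Fin k, m = (i : ℕ) + 1 + (pathGraph n).dist (v i) u} with hTdef
  have hTle : ∀ i : Fin k, T ≤ (i : ℕ) + 1 + (pathGraph n).dist (v i) u :=
    fun i => Nat.sInf_le ⟨i, rfl⟩
  have hTk : T ≤ k + 1 := (hTle i1).trans hi1
  by_cases hT2 : T ≤ 1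
  · omega
  push_neg at hT2
  obtain ⟨i0, hi0⟩ := Nat.sInf_mem hne
  -- minimal witness
  have hP : ∃ m : ℕ, ∃ h : m < k, m + 1 + (pathGraph n).dist (v ⟨m, h⟩) u = T :=
    ⟨i0.1, i0.2, by rw [Fin.eta]; omega⟩
  obtain ⟨istar, hik, hieq, hmin⟩ :
      ∃ m, ∃ h : m < k, m + 1 + (pathGraph n).dist (v ⟨m, h⟩) u = T ∧
        ∀ j, j < m → ∀ h' : j < k, j + 1 + (pathGraph n).dist (v ⟨j, h'⟩) u ≠ T := by
    obtain ⟨h1', h2'⟩ := Nat.find_spec hP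
    refine ⟨Nat.find hP, h1', h2', fun j hj h' => ?_⟩
    have := Nat.find_min hP hj
    push_neg at this
    exact this h'
  have hist_le : istar ≤ T - 1 := by omega
  -- positions
  set X : ℕ → ℤ := fun j => if h : j < k then ((v ⟨j, h⟩ : Fin n) : ℤ) else 0 with hX
  have hdist : ∀ j (h : j < k),
      (((pathGraph n).dist (v ⟨j, h⟩) u : ℕ) : ℤ) = |X j - (u : ℤ)| := by
    intro j h
    rw [pathGraph_dist, natDist_cast]
    simp only [hX, dif_pos h]
  have hTkm : T - 1 ≤ k := by omega
  have habs : ∀ j (h : j < k), |X j - (u : ℤ)| =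
      ((pathGraph n).dist (v ⟨j, h⟩) u : ℤ) := fun j h => (hdist j h).symm
  -- hypotheses of cooling_pack
  have h1 : ∀ i j, i < j → (j < T - 1 ∨ j = istar) → (j : ℤ) - i + 1 ≤ |X i - X j| := by
    intro i j hij hj
    have hjk : j < k := by rcases hj with hj | hj <;> omega
    have hik' : i < k := by omega
    have := hv.1 ⟨i, hik'⟩ ⟨j, hjk⟩ (by simp [Fin.lt_def]; omega)
    simp only at this
    have hcast : ((pathGraph n).dist (v ⟨i, hik'⟩) (v ⟨j, hjk⟩) : ℤ)
        = |X i - X j| := by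
      rw [pathGraph_dist, natDist_cast]
      simp only [hX, dif_pos hik', dif_pos hjk]
    omega
  have h2 : ∀ j, j < istar → (T : ℤ) - j ≤ |X j - (u : ℤ)| := by
    intro j hj
    have hjk : j < k := by omega
    have hne' := hmin j hj hjk
    have hle := hTle ⟨j, hjk⟩
    simp only at hle
    rw [habs j hjk]
    omega
  have h3 : ∀ j, istar ≤ j → j < T - 1 → (T : ℤ) - 1 - j ≤ |X j - (u : ℤ)| := by
    intro j _ hj
    have hjk : j < k := by omega
    have hle := hTle ⟨j, hjk⟩
    simp only at hle
    rw [habs j hjk]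
    omega
  have h4' : |X istar - (u : ℤ)| = (T : ℤ) - 1 - istar := by
    rw [habs istar hik]
    omega
  have hx : ∀ j, j < T - 1 ∨ j = istar → (0 : ℤ) ≤ X j ∧ X j ≤ (n : ℤ) - 1 := by
    intro j hj
    have hjk : j < k := by rcases hj with hj | hj <;> omega
    simp only [hX, dif_pos hjk]
    have := (v ⟨j, hjk⟩).2
    constructor <;> [positivity; exact_mod_cast by omega]
  have hu : (0 : ℤ) ≤ (u : ℤ) ∧ (u : ℤ) ≤ (n : ℤ) - 1 := by
    have := u.2
    constructor <;> [positivity; exact_mod_cast by omega]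
  have hfinal : 2 * (T : ℤ) - 3 ≤ ((n : ℤ) - 1) - 0 := by
    rcases le_or_gt (X istar) (u : ℤ) with hc | hc
    · exact cooling_pack T istar hT2 hist_le X u 0 ((n : ℤ) - 1) hx hu h1 h2 h3 hc
        (by rw [abs_of_nonpos (by omega)] at h4'; omega)
    · have := cooling_pack T istar hT2 hist_le (fun j => -X j) (-(u : ℤ))
        (-((n : ℤ) - 1)) 0
        (fun j hj => by have := hx j hj; constructor <;> simp <;> omega)
        (by constructor <;> simp <;> omega)
        (fun i j hij hj => by
          have := h1 i j hij hj
          simp only [neg_sub_neg]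
          rwa [abs_sub_comm])
        (fun j hj => by
          have := h2 j hj
          simp only [neg_sub_neg]
          rwa [abs_sub_comm])
        (fun j hj hj' => by
          have := h3 j hj hj'
          simp only [neg_sub_neg]
          rwa [abs_sub_comm])
        (by show -X istar ≤ -(u : ℤ); omega)
        (by show -(u : ℤ) - -X istar = _
            rw [abs_of_pos (by omega : (0:ℤ) < X istar - (u:ℤ))] at h4'
            omega)
      omega
  omega

/-- For every `n ≥ 1`, the cooling number of the path on `n` vertices is
`⌈(n + 1) / 2⌉`. -/
theorem coolingNumber_pathGraph (n : ℕ) (hn : 1 ≤ n) :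
    coolingNumber (SimpleGraph.pathGraph n) = (n + 1 + 1) / 2 := by
  have hk : 0 < (n + 1) / 2 := by omega
  set v0 : Fin ((n + 1) / 2) → Fin n := fun i => ⟨2 * i.1, by have := i.2; omega⟩ with hv0
  have hseq : IsCoolingSeq (SimpleGraph.pathGraph n) v0 := by
    constructor
    · intro i j hij
      rw [pathGraph_dist]
      have hij' : i.1 < j.1 := hij
      show (j : ℕ) - (i : ℕ) < Nat.dist (2 * i.1) (2 * j.1)
      simp [Nat.dist]; omega
    · intro u
      have hu2 : u.1 / 2 < (n + 1) / 2 := by have := u.2; omega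
      refine ⟨⟨u.1 / 2, hu2⟩, ?_⟩
      rw [pathGraph_dist]
      have hd : Nat.dist (2 * (u.1 / 2)) u.1 ≤ 1 := by simp [Nat.dist]; omega
      show u.1 / 2 + 1 + Nat.dist (2 * (u.1 / 2)) u.1 ≤ (n + 1) / 2 + 1
      omega
  have hlow : (n + 1 + 1) / 2 ≤ coolTime (SimpleGraph.pathGraph n) v0 := by
    set ulast : Fin n := ⟨n - 1, by omega⟩ with hul
    refine le_trans ?_ (Finset.le_sup (Finset.mem_univ ulast))
    refine le_csInf ⟨((⟨0, hk⟩ : Fin ((n+1)/2)) : ℕ) + 1 +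
      (SimpleGraph.pathGraph n).dist (v0 ⟨0, hk⟩) ulast, ⟨⟨0, hk⟩, rfl⟩⟩ ?_
    rintro b ⟨i, rfl⟩
    rw [pathGraph_dist]
    have hi := i.2
    have hd : Nat.dist (2 * i.1) (n - 1) = n - 1 - 2 * i.1 := by simp [Nat.dist]; omega
    show (n + 1 + 1) / 2 ≤ i.1 + 1 + Nat.dist (2 * i.1) (n - 1)
    omega
  have hmem : coolTime (SimpleGraph.pathGraph n) v0 ∈
      {T : ℕ | ∃ (k : ℕ) (v : Fin k → Fin n),
        IsCoolingSeq (SimpleGraph.pathGraph n) v ∧ T = coolTime (SimpleGraph.pathGraph n) v} :=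
    ⟨_, v0, hseq, rfl⟩
  have hbdd : ∀ T ∈ {T : ℕ | ∃ (k : ℕ) (v : Fin k → Fin n),
      IsCoolingSeq (SimpleGraph.pathGraph n) v ∧ T = coolTime (SimpleGraph.pathGraph n) v},
      T ≤ (n + 1 + 1) / 2 := by
    rintro T ⟨k, v, hv, rfl⟩
    have := coolTime_le_path hn v hv
    omega
  apply le_antisymm
  · exact csSup_le ⟨_, hmem⟩ hbdd
  · exact hlow.trans (le_csSup ⟨(n + 1 + 1) / 2, hbdd⟩ hmem)
end

section
/- For every n ≥ 3, the cooling number of the cycle C_n on n vertices equals ⌈(n+2)/3⌉. -/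
/-!
Cut the cycle at a vertex `u` and read sources as points of the segment `[0, n]`, both ends
being `u`. If source `i` lies at distance at least `k - i` from both ends and sources `i ≠ j`
at distance at least `|i - j| + 1` from each other, then walking from an end towards
source `0` gains one unit for every source passed, so `n ≥ 2k + (k - 1)`. Taking `u` to be
the last source bounds the length of a cooling sequence, and taking `u` to be a vertex cooled
after round `⌈(n + 2) / 3⌉` leads to a contradiction. Sources at `0, 2, 4, …` attain the bound.
-/

open Finset SimpleGraph

theorem Fin.val_sub_cases {n : ℕ} (a b : Fin n) :
    (b.val ≤ a.val ∧ (a - b).val = a.val - b.val) ∨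
      (a.val < b.val ∧ (a - b).val = n + a.val - b.val) := by
  rcases le_or_gt b a with h | h
  · exact .inl ⟨h, Fin.sub_val_of_le h⟩
  · exact .inr ⟨h, Fin.coe_sub_iff_lt.mpr h⟩

namespace SimpleGraph

theorem Reachable.apply_le_apply_add_dist {V : Type*} {G : SimpleGraph V} {u v : V}
    (h : G.Reachable u v) {f : V → ℕ} (hf : ∀ a b, G.Adj a b → f a ≤ f b + 1) :
    f u ≤ f v + G.dist u v := by
  obtain ⟨p, hp⟩ := h.exists_walk_length_eq_dist
  rw [← hp]
  clear hp h
  induction p with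
  | nil => simp
  | cons hadj p ih => grind [Walk.length_cons]

variable {n : ℕ}

theorem cycleGraph_dist_le_val_sub (x y : Fin n) : (cycleGraph n).dist x y ≤ (y - x).val := by
  induction hd : (y - x).val generalizing y with
  | zero =>
    obtain rfl : y = x := by have := Fin.val_sub_cases y x; ext; omega
    simp
  | succ d ih =>
    obtain ⟨y', hy'⟩ : ∃ y' : Fin n, y'.val + 1 = y.val ∨ (y.val = 0 ∧ y'.val + 1 = n) :=
      if hy : y.val = 0 then ⟨⟨n - 1, by omega⟩, by simp only; omega⟩
      else ⟨⟨y.val - 1, by omega⟩, by simp only; omega⟩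
    have hadj : (cycleGraph n).Adj y' y := by
      have := Fin.val_sub_cases y y'
      rw [cycleGraph_adj']
      omega
    calc (cycleGraph n).dist x y ≤ (cycleGraph n).dist x y' + (cycleGraph n).dist y' y :=
          hadj.reachable.dist_triangle_right x
      _ ≤ d + 1 := by
        rw [dist_eq_one_iff_adj.mpr hadj]
        gcongr
        apply ih
        have := Fin.val_sub_cases y x
        have := Fin.val_sub_cases y' x
        omega

theorem cycleGraph_dist (x y : Fin n) :
    (cycleGraph n).dist x y = min (x - y).val (y - x).val := by
  refine le_antisymm (le_min ?_ (cycleGraph_dist_le_val_sub x y)) ?_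
  · rw [dist_comm]; exact cycleGraph_dist_le_val_sub y x
  · have key := (cycleGraph_preconnected x y).apply_le_apply_add_dist
      (f := fun a => min (a - y).val (y - a).val) fun a b hab => by
        rw [cycleGraph_adj'] at hab
        have := Fin.val_sub_cases a b
        have := Fin.val_sub_cases b a
        have := Fin.val_sub_cases a y
        have := Fin.val_sub_cases y a
        have := Fin.val_sub_cases b y
        have := Fin.val_sub_cases y b
        omega
    have := Fin.val_sub_cases y y
    omega

theorem cycleGraph_dist_le_abs_sub (x y u : Fin n) :
    ((cycleGraph n).dist x y : ℤ) ≤ |((x - u).val : ℤ) - (y - u).val| := by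
  have := Fin.val_sub_cases x y
  have := Fin.val_sub_cases y x
  have := Fin.val_sub_cases x u
  have := Fin.val_sub_cases y u
  rw [cycleGraph_dist, abs_eq_max_neg]
  omega

theorem cycleGraph_dist_of_le {x y : Fin n} (h : x.val ≤ y.val) :
    (cycleGraph n).dist x y = min (y.val - x.val) (n - (y.val - x.val)) := by
  have := Fin.val_sub_cases x y
  have := Fin.val_sub_cases y x
  rw [cycleGraph_dist]
  omega

end SimpleGraph

section LinearArrangement

variable {ι : Type*} {p h : ι → ℤ}

theorem injective_of_abs_sub_add_one_le (hsep : ∀ i j, i ≠ j → |h i - h j| + 1 ≤ |p i - p j|) :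
    Function.Injective p := fun i j hij => by_contra fun hne => by
  have := hsep i j hne
  rw [hij, sub_self, abs_zero] at this
  linarith [abs_nonneg (h i - h j)]

variable [Fintype ι]

theorem add_card_filter_lt_le (hsep : ∀ i j, i ≠ j → |h i - h j| + 1 ≤ |p i - p j|)
    (hle : ∀ i, h i ≤ p i) (i : ι) : h i + #{j | p j < p i} ≤ p i := by
  classical
  suffices ∀ m : ℕ, ∀ i, #{j | p j < p i} = m → h i + m ≤ p i from this _ i rfl
  intro m
  induction m with
  | zero => exact fun i _ => by simpa using hle i
  | succ m ih =>
    intro i hi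
    -- `j` is the nearest point to the left of `i`
    obtain ⟨j, hj, hmax⟩ := exists_max_image {j | p j < p i} p (card_pos.mp (by omega))
    have hji : p j < p i := (mem_filter.mp hj).2
    have hleft : univ.filter (p · < p i) = insert j (univ.filter (p · < p j)) := by
      ext l
      simp only [mem_filter, mem_univ, true_and, mem_insert]
      constructor
      · intro hl
        rcases (hmax l (by simpa using hl)).lt_or_eq with hlt | heq
        · exact .inr hlt
        · exact .inl (injective_of_abs_sub_add_one_le hsep heq)
      · rintro (rfl | hl)
        · exact hji
        · exact hl.trans hji
    rw [hleft, card_insert_of_notMem (by simp)] at hi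
    have hj := ih j (by omega)
    have hij := hsep i j (by rintro rfl; exact lt_irrefl _ hji)
    rw [abs_of_pos (sub_pos.mpr hji)] at hij
    push_cast
    linarith [le_abs_self (h i - h j)]

theorem two_mul_add_card_le (n : ℤ) (hsep : ∀ i j, i ≠ j → |h i - h j| + 1 ≤ |p i - p j|)
    (hle : ∀ i, h i ≤ p i) (hge : ∀ i, h i ≤ n - p i) (i : ι) :
    2 * h i + Fintype.card ι ≤ n + 1 := by
  classical
  have hleft := add_card_filter_lt_le hsep hle i
  have hright := add_card_filter_lt_le (p := fun j => n - p j)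
    (fun i j hij => by simpa [abs_sub_comm] using hsep i j hij) hge i
  simp only [sub_lt_sub_iff_left] at hright
  have hcover : univ ⊆ univ.filter (p · < p i) ∪ univ.filter (p i < p ·) ∪ {i} := by
    intro j _
    simp only [mem_union, mem_filter, mem_univ, true_and, mem_singleton]
    rcases lt_trichotomy (p j) (p i) with hlt | heq | hgt
    · exact .inl (.inl hlt)
    · exact .inr (injective_of_abs_sub_add_one_le hsep heq)
    · exact .inl (.inr hgt)
  have hcard := (card_le_card hcover).trans (card_union_le _ _)
  grw [card_union_le, card_univ, card_singleton] at hcard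
  have : (Fintype.card ι : ℤ) ≤ #{j | p j < p i} + #{j | p i < p j} + 1 := by exact_mod_cast hcard
  linarith

end LinearArrangement

theorem three_mul_le_of_le_dist {n k : ℕ} (v : Fin k → Fin n) (u : Fin n)
    (hsep : ∀ i j : Fin k, i < j → (j : ℕ) - (i : ℕ) < (cycleGraph n).dist (v i) (v j))
    (hu : ∀ i : Fin k, k - (i : ℕ) ≤ (cycleGraph n).dist (v i) u) : 3 * k ≤ n + 1 := by
  rcases Nat.eq_zero_or_pos k with rfl | hk
  · omega
  have hsep' : ∀ i j : Fin k, i ≠ j →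
      |((k : ℤ) - i) - (k - j)| + 1 ≤ |((v i - u).val : ℤ) - (v j - u).val| := by
    intro i j hij
    have hdist := cycleGraph_dist_le_abs_sub (v i) (v j) u
    rcases Fin.lt_or_lt_of_ne hij with hlt | hlt
    · have := hsep i j hlt
      simp only [abs_eq_max_neg] at hdist ⊢
      omega
    · have := hsep j i hlt
      rw [SimpleGraph.dist_comm] at this
      simp only [abs_eq_max_neg] at hdist ⊢
      omega
  have key := two_mul_add_card_le n hsep' (fun i => ?_) (fun i => ?_) ⟨0, hk⟩
  · simp only [Nat.cast_zero, sub_zero, Fintype.card_fin] at key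
    omega
  all_goals
    have hui := hu i
    rw [cycleGraph_dist] at hui
    have := i.isLt
    have := Fin.val_sub_cases (v i) u
    have := Fin.val_sub_cases u (v i)
    omega

section CoolTime

variable {V : Type*} [Fintype V] {G : SimpleGraph V} {k : ℕ} {v : Fin k → V} {T : ℕ}

theorem coolTime_le (h : ∀ u, ∃ i : Fin k, (i : ℕ) + 1 + G.dist (v i) u ≤ T) :
    coolTime G v ≤ T := by
  refine Finset.sup_le fun u _ => ?_
  obtain ⟨i, hi⟩ := h u
  exact le_trans (Nat.sInf_le ⟨i, rfl⟩) hi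

theorem le_coolTime (hk : 0 < k) (u : V) (h : ∀ i : Fin k, T ≤ (i : ℕ) + 1 + G.dist (v i) u) :
    T ≤ coolTime G v := by
  refine le_trans ?_ (Finset.le_sup (Finset.mem_univ u))
  exact le_csInf ⟨_, ⟨0, hk⟩, rfl⟩ (by rintro _ ⟨i, rfl⟩; exact h i)

end CoolTime

theorem coolTime_cycleGraph_le {n k : ℕ} {v : Fin k → Fin n}
    (hv : IsCoolingSeq (cycleGraph n) v) : coolTime (cycleGraph n) v ≤ (n + 4) / 3 := by
  have hk : k ≤ (n + 4) / 3 := by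
    cases k with
    | zero => omega
    | succ m =>
      have := three_mul_le_of_le_dist (v ∘ Fin.castSucc) (v (Fin.last m))
        (fun i j hij => hv.1 _ _ (Fin.castSucc_lt_castSucc_iff.mpr hij))
        (fun i => by simpa using (hv.1 _ _ (Fin.castSucc_lt_last i)).le)
      omega
  refine coolTime_le fun u => ?_
  by_contra! hlate
  obtain ⟨i, hi⟩ := hv.2 u
  have hk' : k = (n + 4) / 3 := by have := hlate i; omega
  have := three_mul_le_of_le_dist v u hv.1 fun j => by have := hlate j; omega
  omega

def everyOtherVertex (n : ℕ) : Fin ((n + 2) / 3) → Fin n := fun i => ⟨2 * i, by omega⟩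

theorem isCoolingSeq_everyOtherVertex (n : ℕ) :
    IsCoolingSeq (cycleGraph n) (everyOtherVertex n) := by
  refine ⟨fun i j hij => ?_, fun u => ?_⟩
  · have : (i : ℕ) < j := hij
    rw [cycleGraph_dist_of_le (by simp only [everyOtherVertex]; omega)]
    simp only [everyOtherVertex]
    omega
  · have := u.isLt
    obtain ⟨i, hi, hiu⟩ : ∃ i : Fin ((n + 2) / 3), (i : ℕ) + 1 +
        min ((u : ℕ) - 2 * i) (n - ((u : ℕ) - 2 * i)) ≤ (n + 2) / 3 + 1 ∧ 2 * (i : ℕ) ≤ u := by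
      by_cases hu : (n + 2) / 3 < u ∧ u < 2 * ((n + 2) / 3)
      · exact ⟨⟨u - (n + 2) / 3, by omega⟩, by simp only; omega, by simp only; omega⟩
      · exact ⟨⟨0, by omega⟩, by simp only; omega, by simp only; omega⟩
    refine ⟨i, ?_⟩
    rw [cycleGraph_dist_of_le (by simpa [everyOtherVertex] using hiu)]
    simpa [everyOtherVertex] using hi

theorem coolTime_everyOtherVertex {n : ℕ} (hn : 0 < n) :
    coolTime (cycleGraph n) (everyOtherVertex n) = (n + 4) / 3 := by
  refine le_antisymm (coolTime_cycleGraph_le (isCoolingSeq_everyOtherVertex n)) ?_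
  refine le_coolTime (by omega) ⟨n - (n + 2) / 3, by omega⟩ fun i => ?_
  have := i.isLt
  rw [cycleGraph_dist_of_le (by simp only [everyOtherVertex]; omega)]
  simp only [everyOtherVertex]
  omega

/-- For every `n ≥ 3`, the cooling number of the cycle on `n` vertices is
`⌈(n + 2) / 3⌉`. -/
theorem coolingNumber_cycleGraph (n : ℕ) (hn : 3 ≤ n) :
    coolingNumber (SimpleGraph.cycleGraph n) = (n + 2 + 2) / 3 := by
  refine IsGreatest.csSup_eq ⟨⟨_, _, isCoolingSeq_everyOtherVertex n,
    (coolTime_everyOtherVertex (by omega)).symm⟩, ?_⟩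
  rintro _ ⟨k, v, hv, rfl⟩
  exact coolTime_cycleGraph_le hv
end

section
/- For every d ≥ 3, the cooling number of the complete caterpillar CC_d of length d equals d; equivalently, writing n = 2d−2 for the order of CC_d, the cooling number equals ⌈(n+1)/2⌉, which also equals diam(CC_d)+1. -/
/-- The complete caterpillar of length `d`: a spine path `v_1, …, v_d` (here `Sum.inl i`
with `i : Fin d`), with a pendant vertex attached to each internal spine vertex;
`Sum.inr j` (with `j : Fin (d - 2)`) is the pendant attached to the spine vertex
`Sum.inl (j + 1)`. -/
def completeCaterpillar (d : ℕ) : SimpleGraph (Fin d ⊕ Fin (d - 2)) :=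
  SimpleGraph.fromRel fun a b =>
    match a, b with
    | Sum.inl i, Sum.inl j => (i : ℕ) + 1 = (j : ℕ)
    | Sum.inr j, Sum.inl i => (i : ℕ) = (j : ℕ) + 1
    | _, _ => False

namespace CC
open SimpleGraph Sum

variable {d : ℕ}

def pos : Fin d ⊕ Fin (d-2) → ℕ
  | Sum.inl i => i
  | Sum.inr j => (j : ℕ) + 1

def pen : Fin d ⊕ Fin (d-2) → ℕ
  | Sum.inl _ => 0
  | Sum.inr _ => 1

def ed (u w : Fin d ⊕ Fin (d-2)) : ℕ :=
  if u = w then 0 else (pos u - pos w) + (pos w - pos u) + pen u + pen w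

lemma adj_inl_inl {i j : Fin d} :
    (completeCaterpillar d).Adj (inl i) (inl j) ↔ ((i:ℕ)+1 = j ∨ (j:ℕ)+1 = i) := by
  simp only [completeCaterpillar, SimpleGraph.fromRel_adj]
  constructor
  · rintro ⟨-, h⟩; exact h
  · rintro h
    refine ⟨?_, h⟩
    rintro heq
    rw [inl.injEq] at heq
    subst heq
    omega
lemma adj_inl_inr {i : Fin d} {j : Fin (d-2)} :
    (completeCaterpillar d).Adj (inl i) (inr j) ↔ (i:ℕ) = (j:ℕ)+1 := by
  simp only [completeCaterpillar, SimpleGraph.fromRel_adj]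
  constructor
  · rintro ⟨-, h | h⟩
    · exact h.elim
    · exact h
  · rintro h; exact ⟨by simp, Or.inr h⟩
lemma adj_inr_inr {i j : Fin (d-2)} :
    ¬ (completeCaterpillar d).Adj (inr i) (inr j) := by
  simp only [completeCaterpillar, SimpleGraph.fromRel_adj]
  rintro ⟨-, h | h⟩ <;> exact h
lemma adj_inr_inl {i : Fin (d-2)} {j : Fin d} :
    (completeCaterpillar d).Adj (inr i) (inl j) ↔ (j:ℕ) = (i:ℕ)+1 := by
  rw [SimpleGraph.adj_comm, adj_inl_inr]

lemma ed_step {u x w : Fin d ⊕ Fin (d-2)} (h : (completeCaterpillar d).Adj u x) :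
    ed u w ≤ ed x w + 1 := by
  match u, x, w with
  | inl i, inl i', inl j =>
    rw [adj_inl_inl] at h
    simp only [ed, pos, pen, inl.injEq, ← Fin.val_eq_val]
    split_ifs <;> omega
  | inl i, inl i', inr j =>
    rw [adj_inl_inl] at h
    simp only [ed, pos, pen]
    split_ifs <;> simp_all <;> omega
  | inl i, inr j', inl j =>
    rw [adj_inl_inr] at h
    simp only [ed, pos, pen, inl.injEq, ← Fin.val_eq_val]
    split_ifs <;> simp_all <;> omega
  | inl i, inr j', inr j =>
    rw [adj_inl_inr] at h
    simp only [ed, pos, pen, inr.injEq, ← Fin.val_eq_val]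
    split_ifs <;> simp_all <;> omega
  | inr i', inl x', inl j =>
    rw [adj_inr_inl] at h
    simp only [ed, pos, pen, inl.injEq, ← Fin.val_eq_val]
    split_ifs <;> simp_all <;> omega
  | inr i', inl x', inr j =>
    rw [adj_inr_inl] at h
    simp only [ed, pos, pen, inr.injEq, ← Fin.val_eq_val]
    split_ifs <;> simp_all <;> omega
  | inr i', inr x', w => exact absurd h adj_inr_inr

lemma ed_le_length : ∀ {u w : Fin d ⊕ Fin (d-2)} (p : (completeCaterpillar d).Walk u w),
    ed u w ≤ p.length := by
  intro u w p
  induction p with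
  | nil => simp [ed]
  | cons h p ih =>
    rw [SimpleGraph.Walk.length_cons]
    exact le_trans (ed_step h) (by omega)

lemma spine_walk : ∀ (n : ℕ) (i j : Fin d), (i:ℕ) + n = (j:ℕ) →
    ∃ p : (completeCaterpillar d).Walk (inl i) (inl j), p.length = n := by
  intro n
  induction n with
  | zero =>
    intro i j hij
    obtain rfl : i = j := Fin.ext (by omega)
    exact ⟨SimpleGraph.Walk.nil, rfl⟩
  | succ n ih =>
    intro i j hij
    have hi1 : (i:ℕ) + 1 < d := by have := j.isLt; omega
    obtain ⟨p, hp⟩ := ih ⟨(i:ℕ)+1, hi1⟩ j (by simpa using by omega)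
    exact ⟨SimpleGraph.Walk.cons (adj_inl_inl.mpr (Or.inl rfl)) p, by simp [hp]⟩

lemma walk_exists (u w : Fin d ⊕ Fin (d-2)) :
    ∃ p : (completeCaterpillar d).Walk u w, p.length = ed u w := by
  have spine : ∀ i j : Fin d, ∃ p : (completeCaterpillar d).Walk (inl i) (inl j),
      p.length = ((i:ℕ) - j) + ((j:ℕ) - i) := by
    intro i j
    rcases le_total (i:ℕ) (j:ℕ) with hle | hle
    · obtain ⟨p, hp⟩ := spine_walk ((j:ℕ) - i) i j (by omega)
      exact ⟨p, by omega⟩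
    · obtain ⟨p, hp⟩ := spine_walk ((i:ℕ) - j) j i (by omega)
      exact ⟨p.reverse, by simp [hp]; omega⟩
  match u, w with
  | inl i, inl j =>
    obtain ⟨p, hp⟩ := spine i j
    refine ⟨p, ?_⟩
    simp only [ed, pos, pen, inl.injEq]
    split_ifs with he
    · subst he; omega
    · have : (i:ℕ) ≠ (j:ℕ) := fun hh => he (Fin.ext hh)
      omega
  | inl i, inr j =>
    have hj1 : (j:ℕ) + 1 < d := by have := j.isLt; omega
    obtain ⟨p, hp⟩ := spine i ⟨(j:ℕ)+1, hj1⟩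
    refine ⟨p.concat (adj_inl_inr.mpr rfl), ?_⟩
    rw [SimpleGraph.Walk.length_concat]
    simp only [ed, pos, pen]
    rw [if_neg (by simp)]
    simp at hp
    omega
  | inr j, inl i =>
    have hj1 : (j:ℕ) + 1 < d := by have := j.isLt; omega
    obtain ⟨p, hp⟩ := spine ⟨(j:ℕ)+1, hj1⟩ i
    refine ⟨SimpleGraph.Walk.cons (adj_inr_inl.mpr rfl) p, ?_⟩
    rw [SimpleGraph.Walk.length_cons]
    simp only [ed, pos, pen]
    rw [if_neg (by simp)]
    simp at hp
    omega
  | inr j, inr j' =>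
    by_cases he : j = j'
    · subst he; exact ⟨SimpleGraph.Walk.nil, by simp [ed]⟩
    · have hj1 : (j:ℕ) + 1 < d := by have := j.isLt; omega
      have hj1' : (j':ℕ) + 1 < d := by have := j'.isLt; omega
      obtain ⟨p, hp⟩ := spine ⟨(j:ℕ)+1, hj1⟩ ⟨(j':ℕ)+1, hj1'⟩
      refine ⟨SimpleGraph.Walk.cons (adj_inr_inl.mpr rfl)
        (p.concat (adj_inl_inr.mpr rfl)), ?_⟩
      rw [SimpleGraph.Walk.length_cons, SimpleGraph.Walk.length_concat]
      simp only [ed, pos, pen]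
      rw [if_neg (by simp [he])]
      simp at hp
      omega

lemma dist_eq (u w : Fin d ⊕ Fin (d-2)) :
    (completeCaterpillar d).dist u w = ed u w := by
  obtain ⟨p, hp⟩ := walk_exists u w
  refine le_antisymm (hp ▸ SimpleGraph.dist_le p) ?_
  obtain ⟨q, hq⟩ := SimpleGraph.Reachable.exists_walk_length_eq_dist ⟨p⟩
  exact hq ▸ ed_le_length q


open SimpleGraph Sum

variable {d : ℕ}

lemma ed_le_bound (u w : Fin d ⊕ Fin (d-2)) : ed u w ≤ d - 1 := by
  match u, w with
  | inl i, inl j =>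
    have := i.isLt; have := j.isLt
    simp only [ed, pos, pen]; split_ifs <;> omega
  | inl i, inr j =>
    have := i.isLt; have := j.isLt
    simp only [ed, pos, pen]; split_ifs <;> omega
  | inr i, inl j =>
    have := i.isLt; have := j.isLt
    simp only [ed, pos, pen]; split_ifs <;> omega
  | inr i, inr j =>
    have := i.isLt; have := j.isLt
    simp only [ed, pos, pen]; split_ifs <;> omega

lemma graphDiam_eq (hd : 3 ≤ d) : graphDiam (completeCaterpillar d) = d - 1 := by
  refine le_antisymm (Finset.sup_le fun p _ => ?_) ?_
  · rw [dist_eq]; exact ed_le_bound _ _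
  · have h := Finset.le_sup (f := fun p : (Fin d ⊕ Fin (d-2)) × (Fin d ⊕ Fin (d-2)) =>
      (completeCaterpillar d).dist p.1 p.2)
      (Finset.mem_univ ((inl ⟨0, by omega⟩ : Fin d ⊕ Fin (d-2)), inl ⟨d-1, by omega⟩))
    refine le_trans ?_ h
    dsimp only
    rw [dist_eq]
    simp only [ed, pos, pen]
    rw [if_neg (by simp [Fin.ext_iff]; omega)]
    simp

def cseq (d : ℕ) (hd : 3 ≤ d) : Fin (d-1) → Fin d ⊕ Fin (d-2) := fun i =>
  if h : (i:ℕ) = 0 then inl ⟨0, by omega⟩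
  else inr ⟨(i:ℕ)-1, by have := i.isLt; omega⟩

lemma cseq_isCooling (hd : 3 ≤ d) : IsCoolingSeq (completeCaterpillar d) (cseq d hd) := by
  constructor
  · intro i j hij
    have hij' : (i:ℕ) < (j:ℕ) := hij
    have hj : (j:ℕ) ≠ 0 := by omega
    have hjlt := j.isLt
    rw [dist_eq]
    by_cases hi : (i:ℕ) = 0
    · simp only [cseq, dif_pos hi, dif_neg hj, ed, pos, pen]
      rw [if_neg (by simp)]
      simp; omega
    · simp only [cseq, dif_neg hi, dif_neg hj, ed, pos, pen]
      rw [if_neg (by simp [Fin.ext_iff]; omega)]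
      simp; omega
  · intro u
    match u with
    | inl m =>
      refine ⟨⟨0, by omega⟩, ?_⟩
      rw [dist_eq]
      have := m.isLt
      simp only [cseq, dif_pos rfl, ed, pos, pen]
      split_ifs <;> simp <;> omega
    | inr p =>
      have hp := p.isLt
      refine ⟨⟨(p:ℕ)+1, by omega⟩, ?_⟩
      rw [dist_eq]
      have : cseq d hd ⟨(p:ℕ)+1, by omega⟩ = inr p := by
        simp [cseq]
      rw [this]
      simp [ed]; omega

lemma coolTime_cseq (hd : 3 ≤ d) : coolTime (completeCaterpillar d) (cseq d hd) = d := by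
  refine le_antisymm (Finset.sup_le fun u _ => ?_) ?_
  · match u with
    | inl m =>
      have hm := m.isLt
      refine le_trans (Nat.sInf_le ⟨⟨0, by omega⟩, rfl⟩) ?_
      rw [dist_eq]
      simp only [cseq, dif_pos rfl, ed, pos, pen]
      split_ifs <;> simp <;> omega
    | inr p =>
      have hp := p.isLt
      refine le_trans (Nat.sInf_le ⟨⟨(p:ℕ)+1, by omega⟩, rfl⟩) ?_
      rw [dist_eq]
      have : cseq d hd ⟨(p:ℕ)+1, by omega⟩ = inr p := by simp [cseq]
      rw [this]
      simp [ed]; omega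
  · have h := Finset.le_sup (f := fun u : Fin d ⊕ Fin (d-2) =>
      sInf {m : ℕ | ∃ i : Fin (d-1), m = (i:ℕ) + 1 + (completeCaterpillar d).dist (cseq d hd i) u})
      (Finset.mem_univ (inl ⟨d-1, by omega⟩ : Fin d ⊕ Fin (d-2)))
    refine le_trans ?_ h
    refine le_csInf ⟨(0:ℕ)+1+(completeCaterpillar d).dist (cseq d hd ⟨0, by omega⟩) (inl ⟨d-1, by omega⟩), ⟨⟨0, by omega⟩, rfl⟩⟩ ?_
    rintro b ⟨i, rfl⟩
    have hilt := i.isLt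
    rw [dist_eq]
    by_cases hi : (i:ℕ) = 0
    · simp only [cseq, dif_pos hi, ed, pos, pen]
      rw [if_neg (by simp [Fin.ext_iff]; omega)]
      simp; omega
    · simp only [cseq, dif_neg hi, ed, pos, pen]
      rw [if_neg (by simp)]
      simp; omega

lemma coolingNumber_eq (hd : 3 ≤ d) : coolingNumber (completeCaterpillar d) = d := by
  have hmem : d ∈ {T : ℕ | ∃ (k : ℕ) (v : Fin k → (Fin d ⊕ Fin (d-2))),
      IsCoolingSeq (completeCaterpillar d) v ∧ T = coolTime (completeCaterpillar d) v} :=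
    ⟨d-1, cseq d hd, cseq_isCooling hd, (coolTime_cseq hd).symm⟩
  have hub : ∀ T ∈ {T : ℕ | ∃ (k : ℕ) (v : Fin k → (Fin d ⊕ Fin (d-2))),
      IsCoolingSeq (completeCaterpillar d) v ∧ T = coolTime (completeCaterpillar d) v}, T ≤ d := by
    rintro T ⟨k, v, ⟨h1, h2⟩, rfl⟩
    have hk1 : 1 ≤ k := by
      obtain ⟨i, -⟩ := h2 (inl ⟨0, by omega⟩)
      have := i.isLt; omega
    have hk : k + 1 ≤ d := by
      rcases eq_or_lt_of_le hk1 with h | h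
      · omega
      · have hlt : (⟨0, by omega⟩ : Fin k) < ⟨k-1, by omega⟩ := by
          rw [Fin.lt_def]; simp; omega
        have := h1 ⟨0, by omega⟩ ⟨k-1, by omega⟩ hlt
        have hb : (completeCaterpillar d).dist (v ⟨0, by omega⟩) (v ⟨k-1, by omega⟩) ≤ d - 1 := by
          rw [dist_eq]; exact ed_le_bound _ _
        simp at this
        omega
    refine le_trans (Finset.sup_le fun u _ => ?_) hk
    obtain ⟨i, hi⟩ := h2 u
    exact le_trans (Nat.sInf_le ⟨i, rfl⟩) hi
  exact le_antisymm (csSup_le ⟨d, hmem⟩ hub) (le_csSup ⟨d, fun T hT => hub T hT⟩ hmem)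

end CC

/-- For `d ≥ 3`, the cooling number of the complete caterpillar of length `d` equals `d`,
which equals `⌈(n + 1) / 2⌉` for its order `n = 2d - 2`, and also equals its diameter
plus one. -/
theorem coolingNumber_completeCaterpillar (d : ℕ) (hd : 3 ≤ d) :
    coolingNumber (completeCaterpillar d) = d ∧
    d = (2 * d - 2 + 1 + 1) / 2 ∧
    d = graphDiam (completeCaterpillar d) + 1 := by
  refine ⟨CC.coolingNumber_eq hd, by omega, ?_⟩
  rw [CC.graphDiam_eq hd]
  omega
end

section
/- Let T be a spider with 2m legs, each of length r, where m ≥ 1 and r ≥ 1. If m < ⌈log_2(r+1)⌉, then the cooling number satisfies CL(T) ≥ 2 · Σ_{i=1}^{m} ⌊(r+1)/2^i⌋. -/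
/-- The spider with `l` legs each of length `r`: a head `Sum.inl ()` together with
`l` disjoint paths of `r` vertices; `Sum.inr (i, j)` is the `(j + 1)`-st vertex of
leg `i`, counting from the head, and the first vertex of each leg is joined to the
head. -/
def spider (l r : ℕ) : SimpleGraph (Unit ⊕ Fin l × Fin r) :=
  SimpleGraph.fromRel fun a b =>
    match a, b with
    | Sum.inl _, Sum.inr p => (p.2 : ℕ) = 0
    | Sum.inr p, Sum.inr q => p.1 = q.1 ∧ (p.2 : ℕ) + 1 = (q.2 : ℕ)
    | _, _ => False

/-!
A sequence of sources each of which is still uncooled when it is chosen can be completed to a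
cooling sequence, since one of maximal length cannot be extended; and a process with `k` sources
ends no earlier than round `k`, when the last source is chosen. So it suffices to find such a
sequence of length `2S`, `S = ∑_{i=1}^m ⌊(r+1)/2^i⌋`.

Split the legs into two halves of `m` legs. In each half, leg `s` carries a block of
`⌊(r+1)/2^(s+1)⌋` sources on every other vertex, the last one on the leaf; numbering the sources
of a half `0, …, S-1` block by block, source `x` lies at depth more than `x`. Play the first half
in decreasing order, then the second in increasing order. Two sources on one leg are then twice
as far apart as in the sequence, and two sources `x`, `y` on different legs are at distance at
least `x + y + 2`, which exceeds their distance in the sequence.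
-/

open SimpleGraph

section Cooling

variable {V : Type*} {G : SimpleGraph V}

variable (G) in
def IsUncooledSeq {k : ℕ} (v : Fin k → V) : Prop :=
  ∀ i j : Fin k, i < j → (j : ℕ) - (i : ℕ) < G.dist (v i) (v j)

lemma IsUncooledSeq.injective {k : ℕ} {v : Fin k → V} (hv : IsUncooledSeq G v) :
    Function.Injective v := by
  intro i j hij
  by_contra hne
  rcases lt_or_gt_of_ne hne with h | h
  · simpa [hij] using hv i j h
  · simpa [hij] using hv j i h

lemma IsUncooledSeq.snoc {k : ℕ} {v : Fin k → V} (hv : IsUncooledSeq G v) {u : V}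
    (hu : ∀ i : Fin k, k - (i : ℕ) < G.dist (v i) u) :
    IsUncooledSeq G (Fin.snoc v u : Fin (k + 1) → V) := by
  intro i j hij
  induction j using Fin.lastCases with
  | last =>
    obtain ⟨i, rfl⟩ := Fin.exists_castSucc_eq.2 (Fin.ne_last_of_lt hij)
    simpa using hu i
  | cast j =>
    obtain ⟨i, rfl⟩ :=
      Fin.exists_castSucc_eq.2 (Fin.ne_last_of_lt (hij.trans (Fin.castSucc_lt_last j)))
    simpa using hv i j (Fin.castSucc_lt_castSucc_iff.1 hij)

lemma IsUncooledSeq.le_coolTime [Fintype V] {k : ℕ} {v : Fin (k + 1) → V}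
    (hv : IsUncooledSeq G v) : k + 1 ≤ coolTime G v := by
  refine le_trans ?_ (Finset.le_sup (f := fun u => sInf {m : ℕ | ∃ i : Fin (k + 1),
    m = (i : ℕ) + 1 + G.dist (v i) u}) (Finset.mem_univ (v (Fin.last k))))
  refine le_csInf ⟨_, Fin.last k, rfl⟩ ?_
  rintro _ ⟨i, rfl⟩
  rcases (Fin.le_last i).lt_or_eq with h | rfl
  · have := hv i _ h
    simp only [Fin.val_last] at this
    omega
  · simp

lemma IsCoolingSeq.isUncooledSeq {k : ℕ} {v : Fin k → V} (hv : IsCoolingSeq G v) :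
    IsUncooledSeq G v :=
  hv.1

lemma IsCoolingSeq.coolTime_le [Fintype V] {k : ℕ} {v : Fin k → V} (hv : IsCoolingSeq G v) :
    coolTime G v ≤ k + 1 :=
  Finset.sup_le fun u _ =>
    let ⟨i, hi⟩ := hv.2 u
    le_trans (Nat.sInf_le (s := {m : ℕ | ∃ i : Fin k, m = (i : ℕ) + 1 + G.dist (v i) u})
      ⟨i, rfl⟩) hi

lemma IsUncooledSeq.length_le_card [Fintype V] {k : ℕ} {v : Fin k → V}
    (hv : IsUncooledSeq G v) : k ≤ Fintype.card V := by
  simpa using Fintype.card_le_of_injective v hv.injective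

lemma IsUncooledSeq.exists_isCoolingSeq [Fintype V] {k : ℕ} {v : Fin k → V}
    (hv : IsUncooledSeq G v) : ∃ (n : ℕ) (w : Fin n → V), k ≤ n ∧ IsCoolingSeq G w := by
  set L : Set ℕ := {n | ∃ w : Fin n → V, IsUncooledSeq G w}
  have hL : BddAbove L := ⟨Fintype.card V, by rintro n ⟨w, hw⟩; exact hw.length_le_card⟩
  obtain ⟨w, hw⟩ : sSup L ∈ L := Nat.sSup_mem ⟨k, v, hv⟩ hL
  refine ⟨_, w, le_csSup hL ⟨v, hv⟩, hw, ?_⟩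
  by_contra! hfar
  obtain ⟨u, hu⟩ := hfar
  have hsnoc : sSup L + 1 ∈ L := ⟨_, hw.snoc (u := u) fun i => by have := hu i; omega⟩
  have := le_csSup hL hsnoc
  omega

lemma bddAbove_coolTimes [Fintype V] :
    BddAbove {T | ∃ (k : ℕ) (v : Fin k → V), IsCoolingSeq G v ∧ T = coolTime G v} := by
  refine ⟨Fintype.card V + 1, ?_⟩
  rintro _ ⟨k, v, hv, rfl⟩
  have := hv.coolTime_le
  have := hv.isUncooledSeq.length_le_card
  omega

theorem IsUncooledSeq.le_coolingNumber [Fintype V] {k : ℕ} {v : Fin k → V}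
    (hv : IsUncooledSeq G v) : k ≤ coolingNumber G := by
  obtain ⟨n, w, hkn, hw⟩ := hv.exists_isCoolingSeq
  cases n with
  | zero => omega
  | succ n =>
    exact hkn.trans <| hw.isUncooledSeq.le_coolTime.trans <|
      le_csSup bddAbove_coolTimes ⟨_, w, hw, rfl⟩

end Cooling

namespace SimpleGraph

variable {V : Type*} {G : SimpleGraph V}

lemma Walk.abs_sub_le_length (φ : V → ℤ) (hφ : ∀ a b, G.Adj a b → |φ a - φ b| ≤ 1)
    {u v : V} (p : G.Walk u v) : |φ u - φ v| ≤ p.length := by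
  induction p with
  | nil => simp
  | @cons a b c hab p ih =>
    calc |φ a - φ c| ≤ |φ a - φ b| + |φ b - φ c| := abs_sub_le _ _ _
      _ ≤ 1 + p.length := add_le_add (hφ _ _ hab) ih
      _ = (p.cons hab).length := by push_cast [Walk.length_cons]; ring

lemma Reachable.abs_sub_le_dist (φ : V → ℤ) (hφ : ∀ a b, G.Adj a b → |φ a - φ b| ≤ 1)
    {u v : V} (h : G.Reachable u v) : |φ u - φ v| ≤ G.dist u v := by
  obtain ⟨p, hp⟩ := h.exists_walk_length_eq_dist
  exact hp ▸ p.abs_sub_le_length φ hφ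

end SimpleGraph

section Spider

variable {l r : ℕ}

lemma spider_reachable_head (p : Fin l × Fin r) :
    (spider l r).Reachable (Sum.inl ()) (Sum.inr p) := by
  obtain ⟨i, d, hd⟩ := p
  induction d with
  | zero => exact Adj.reachable (by simp [spider])
  | succ d ih =>
    refine (ih (by omega)).trans (Adj.reachable ?_)
    simp [spider, Prod.ext_iff, Fin.ext_iff]

lemma spider_connected : (spider l r).Connected :=
  (connected_iff_exists_forall_reachable _).2 ⟨Sum.inl (), by
    rintro (⟨⟩ | p)
    exacts [Reachable.rfl, spider_reachable_head p]⟩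

def spiderLegPotential (i : Fin l) : Unit ⊕ Fin l × Fin r → ℤ
  | Sum.inl _ => 0
  | Sum.inr p => if p.1 = i then (p.2 : ℤ) + 1 else -((p.2 : ℤ) + 1)

lemma abs_sub_spiderLegPotential_le_one (i : Fin l) (a b : Unit ⊕ Fin l × Fin r)
    (hab : (spider l r).Adj a b) : |spiderLegPotential i a - spiderLegPotential i b| ≤ 1 := by
  rcases a with ⟨⟩ | ⟨j, a⟩ <;> rcases b with ⟨⟩ | ⟨j', b⟩ <;>
    simp only [spider, fromRel_adj, spiderLegPotential] at hab ⊢ <;> grind [abs_le]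

lemma spider_abs_sub_le_dist (i : Fin l) (a b : Fin r) :
    |(a : ℤ) - b| ≤ (spider l r).dist (Sum.inr (i, a)) (Sum.inr (i, b)) := by
  simpa [spiderLegPotential] using
    (spider_connected.preconnected (Sum.inr (i, a)) (Sum.inr (i, b))).abs_sub_le_dist
      (spiderLegPotential i) (abs_sub_spiderLegPotential_le_one i)

lemma spider_add_add_two_le_dist {i j : Fin l} (hij : i ≠ j) (a b : Fin r) :
    (a : ℕ) + b + 2 ≤ (spider l r).dist (Sum.inr (i, a)) (Sum.inr (j, b)) := by
  have := spider_connected.preconnected (Sum.inr (i, a)) (Sum.inr (j, b)) |>.abs_sub_le_dist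
    (spiderLegPotential i) (abs_sub_spiderLegPotential_le_one i)
  simp only [spiderLegPotential, if_pos, if_neg hij.symm, sub_neg_eq_add] at this
  rw [abs_of_nonneg (by positivity)] at this
  omega

lemma lt_spider_dist {t : ℕ} {p q : Fin l × Fin r}
    (hsame : p.1 = q.1 → (t : ℤ) < |(p.2 : ℤ) - q.2|)
    (hcross : p.1 ≠ q.1 → t < p.2 + q.2 + 2) :
    t < (spider l r).dist (Sum.inr p) (Sum.inr q) := by
  obtain ⟨i, a⟩ := p
  obtain ⟨j, b⟩ := q
  by_cases hij : i = j
  · subst hij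
    have := spider_abs_sub_le_dist i a b
    have : (t : ℤ) < |(a : ℤ) - b| := hsame rfl
    omega
  · have := spider_add_add_two_le_dist hij a b
    have : t < a + b + 2 := hcross hij
    omega

end Spider

section Blocks

variable (n : ℕ)

def blockStart (s : ℕ) : ℕ := ∑ i ∈ Finset.Icc 1 s, n / 2 ^ i

lemma blockStart_zero : blockStart n 0 = 0 := by
  simp [blockStart]

lemma blockStart_succ (s : ℕ) : blockStart n (s + 1) = blockStart n s + n / 2 ^ (s + 1) :=
  Finset.sum_Icc_succ_top (by omega) _

lemma blockStart_add_div_two_pow_le (s : ℕ) : blockStart n s + n / 2 ^ s ≤ n := by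
  induction s with
  | zero => simp [blockStart_zero]
  | succ s ih =>
    have : 2 * (n / 2 ^ (s + 1)) ≤ n / 2 ^ s := by
      rw [pow_succ, ← Nat.div_div_eq_div_mul]
      exact Nat.mul_div_le _ 2
    rw [blockStart_succ]
    omega

variable (m : ℕ)

def blockOf (x : ℕ) : ℕ := Nat.findGreatest (fun s => blockStart n s ≤ x) m

variable {n m} {x : ℕ}

lemma blockStart_blockOf_le : blockStart n (blockOf n m x) ≤ x :=
  Nat.findGreatest_spec (P := fun s => blockStart n s ≤ x) (Nat.zero_le m)
    (by simp [blockStart_zero])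

lemma blockOf_lt (hx : x < blockStart n m) : blockOf n m x < m :=
  (Nat.findGreatest_le m).lt_of_ne fun h => by
    have := blockStart_blockOf_le (n := n) (m := m) (x := x)
    rw [blockOf, h] at this
    omega

lemma lt_blockStart_blockOf_succ (hx : x < blockStart n m) :
    x < blockStart n (blockOf n m x + 1) :=
  not_le.1 (Nat.findGreatest_is_greatest (P := fun s => blockStart n s ≤ x)
    (Nat.lt_succ_self _) (blockOf_lt hx))

variable (n m) in
/-- On a leg with `n - 1` vertices, indexed from `0` next to the head, block `b` occupies every
other vertex, its last source on the leaf `n - 2`. -/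
def sourceDepth (x : ℕ) : ℕ := n - 2 * (blockStart n (blockOf n m x + 1) - x)

lemma add_two_mul_blockStart_blockOf_succ_sub_le (hx : x < blockStart n m) :
    x + 2 * (blockStart n (blockOf n m x + 1) - x) ≤ n := by
  have := blockStart_blockOf_le (n := n) (m := m) (x := x)
  have := lt_blockStart_blockOf_succ hx
  have := blockStart_add_div_two_pow_le n (blockOf n m x + 1)
  have := blockStart_succ n (blockOf n m x)
  omega

lemma le_sourceDepth (hx : x < blockStart n m) : x ≤ sourceDepth n m x := by
  have := add_two_mul_blockStart_blockOf_succ_sub_le hx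
  unfold sourceDepth
  omega

lemma sourceDepth_add_two_le (hx : x < blockStart n m) : sourceDepth n m x + 2 ≤ n := by
  have := add_two_mul_blockStart_blockOf_succ_sub_le hx
  have := lt_blockStart_blockOf_succ hx
  unfold sourceDepth
  omega

lemma sourceDepth_add_two_mul {y : ℕ} (hx : x < blockStart n m) (hy : y < blockStart n m)
    (hxy : blockOf n m x = blockOf n m y) :
    sourceDepth n m x + 2 * y = sourceDepth n m y + 2 * x := by
  have hx' := add_two_mul_blockStart_blockOf_succ_sub_le hx
  have hx'' := lt_blockStart_blockOf_succ hx
  have := add_two_mul_blockStart_blockOf_succ_sub_le hy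
  have := lt_blockStart_blockOf_succ hy
  rw [hxy] at hx' hx''
  unfold sourceDepth
  rw [hxy]
  omega

end Blocks

def mirrorIndex (S q : ℕ) : ℕ := if q < S then S - 1 - q else q - S

lemma mirrorIndex_lt {S q : ℕ} (hq : q < 2 * S) : mirrorIndex S q < S := by
  unfold mirrorIndex
  split_ifs <;> omega

lemma sub_le_mirrorIndex_add_mirrorIndex (S i j : ℕ) :
    j - i ≤ mirrorIndex S i + mirrorIndex S j + 1 := by
  unfold mirrorIndex
  split_ifs <;> omega

lemma sub_le_abs_mirrorIndex_sub {S i j : ℕ} (hside : i < S ↔ j < S) :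
    ((j - i : ℕ) : ℤ) ≤ |(mirrorIndex S i : ℤ) - mirrorIndex S j| := by
  rw [le_abs]
  unfold mirrorIndex
  split_ifs <;> omega

variable (m r : ℕ) in
/-- Position `q < S` of the sequence is source `S - 1 - q` of the first `m` legs, and position
`S + x` is source `x` of the last `m` legs. -/
def spiderSource (q : Fin (2 * blockStart (r + 1) m)) : Fin (2 * m) × Fin r :=
  (⟨(if (q : ℕ) < blockStart (r + 1) m then 0 else m) +
      blockOf (r + 1) m (mirrorIndex (blockStart (r + 1) m) q),
      by have := blockOf_lt (mirrorIndex_lt q.2); split_ifs <;> omega⟩,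
    ⟨sourceDepth (r + 1) m (mirrorIndex (blockStart (r + 1) m) q),
      by have := sourceDepth_add_two_le (mirrorIndex_lt q.2); omega⟩)

theorem isUncooledSeq_spiderSource (m r : ℕ) :
    IsUncooledSeq (spider (2 * m) r) (Sum.inr ∘ spiderSource m r) := by
  intro i j hij
  have hi := mirrorIndex_lt i.2
  have hj := mirrorIndex_lt j.2
  have hgap := sub_le_mirrorIndex_add_mirrorIndex (blockStart (r + 1) m) i j
  refine lt_spider_dist (fun hleg => ?_) (fun _ => ?_)
  · simp only [spiderSource, Fin.ext_iff] at hleg ⊢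
    have := blockOf_lt hi
    have := blockOf_lt hj
    have hside : (i : ℕ) < blockStart (r + 1) m ↔ (j : ℕ) < blockStart (r + 1) m := by
      split_ifs at hleg <;> simp_all <;> omega
    have hblock : blockOf (r + 1) m (mirrorIndex (blockStart (r + 1) m) i) =
        blockOf (r + 1) m (mirrorIndex (blockStart (r + 1) m) j) := by
      split_ifs at hleg <;> omega
    have hdepth := sourceDepth_add_two_mul hi hj hblock
    have hx := sub_le_abs_mirrorIndex_sub hside
    have : (i : ℕ) < j := hij
    rw [le_abs] at hx
    rw [lt_abs]
    omega
  · have := le_sourceDepth hi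
    have := le_sourceDepth hj
    simp only [spiderSource]
    omega

theorem coolingNumber_spider_lower_general (m r : ℕ) :
    2 * ∑ i ∈ Finset.Icc 1 m, (r + 1) / 2 ^ i ≤ coolingNumber (spider (2 * m) r) :=
  (isUncooledSeq_spiderSource m r).le_coolingNumber

/-- For a spider `T` with `2m` legs each of length `r`, if `m < ⌈log₂ (r + 1)⌉`, then
`CL(T) ≥ 2 * ∑_{i=1}^{m} ⌊(r + 1) / 2^i⌋`. -/
theorem coolingNumber_spider_lower (m r : ℕ) (hm : 1 ≤ m) (hr : 1 ≤ r)
    (h : m < Nat.clog 2 (r + 1)) :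
    2 * ∑ i ∈ Finset.Icc 1 m, (r + 1) / 2 ^ i ≤ coolingNumber (spider (2 * m) r) :=
  coolingNumber_spider_lower_general m r
end

section
/- Let G be a finite connected simple graph on n vertices. Define the sequence x_1 = 1 and x_{i+1} = x_i + Φ_V(G, x_i) + 1 (truncating x_i at n when forming Φ_V if necessary), and let I be the smallest index with x_I ≥ n. Then the cooling number satisfies CL(G) ≤ I. -/
/-- The node border of `S`: the set of vertices outside `S` adjacent to some vertex
of `S`. -/
def nodeBorder {V : Type*} (G : SimpleGraph V) (S : Set V) : Set V :=
  {v | v ∉ S ∧ ∃ u ∈ S, G.Adj u v}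

/-- The node-isoperimetric parameter of `G` at `s`: the minimum size of the node border
over all vertex sets of cardinality `s`. -/
noncomputable def phiV {V : Type*} [Fintype V] (G : SimpleGraph V) (s : ℕ) : ℕ :=
  sInf {b : ℕ | ∃ S : Set V, S.ncard = s ∧ b = (nodeBorder G S).ncard}

/-- The sequence `x_1 = 1`, `x_{i+1} = x_i + Φ_V(G, x_i) + 1` (0-indexed: `coolXseq G i`
is `x_{i+1}`), truncating `x_i` at `|V(G)|` when forming `Φ_V`. -/
noncomputable def coolXseq {V : Type*} [Fintype V] (G : SimpleGraph V) : ℕ → ℕ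
  | 0 => 1
  | i + 1 => coolXseq G i + phiV G (min (coolXseq G i) (Fintype.card V)) + 1


/-!
Let `C_t` be the set of vertices cooled by the end of round `t`. Cooling spreads along edges, so
`C_t ∪ N(C_t) ⊆ C_{t+1}`; and the source chosen in round `t + 1` lies outside `C_t ∪ N(C_t)`,
because the distance condition says it is not within reach of any earlier source by then.
Taking a subset of `C_t` of size `x_t`, this gives `|C_{t+1}| ≥ x_t + Φ_V(G, x_t) + 1 = x_{t+1}`.
Hence while sources remain `|C_t| ≥ x_t`, so every vertex is cooled by round `I`.
-/

open Set

lemma SimpleGraph.Adj.dist_le_dist_add_one {V : Type*} {G : SimpleGraph V} {w u : V}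
    (h : G.Adj w u) (a : V) : G.dist a u ≤ G.dist a w + 1 := by
  simpa [SimpleGraph.dist_eq_one_iff_adj.mpr h] using h.reachable.dist_triangle_right a

section NodeBorder

variable {V : Type*} (G : SimpleGraph V)

lemma disjoint_nodeBorder (S : Set V) : Disjoint S (nodeBorder G S) :=
  disjoint_left.mpr fun _ hS hN => hN.1 hS

lemma nodeBorder_subset_union_nodeBorder {S C : Set V} (h : S ⊆ C) :
    nodeBorder G S ⊆ C ∪ nodeBorder G C := by
  rintro u ⟨-, w, hw, hadj⟩
  by_cases hu : u ∈ C
  · exact Or.inl hu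
  · exact Or.inr ⟨hu, w, h hw, hadj⟩

lemma add_phiV_le_ncard_union_nodeBorder [Fintype V] {C : Set V} {x : ℕ} (hx : x ≤ C.ncard) :
    x + phiV G x ≤ (C ∪ nodeBorder G C).ncard := by
  obtain ⟨S, hSC, rfl⟩ := exists_subset_card_eq hx
  calc S.ncard + phiV G S.ncard
      ≤ S.ncard + (nodeBorder G S).ncard := by gcongr; exact Nat.sInf_le ⟨S, rfl, rfl⟩
    _ = (S ∪ nodeBorder G S).ncard := (ncard_union_eq (disjoint_nodeBorder G S)).symm
    _ ≤ (C ∪ nodeBorder G C).ncard := ncard_le_ncard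
          (union_subset (hSC.trans subset_union_left) (nodeBorder_subset_union_nodeBorder G hSC))

end NodeBorder

section Cooling

variable {V : Type*} (G : SimpleGraph V) {k : ℕ} (v : Fin k → V)

/-- The round in which `u` is cooled; the source `v i` is chosen in round `i + 1`. -/
noncomputable def firstCoolRound (u : V) : ℕ :=
  sInf {m : ℕ | ∃ i : Fin k, m = (i : ℕ) + 1 + G.dist (v i) u}

def cooledBy (t : ℕ) : Set V := {u | firstCoolRound G v u ≤ t}

lemma firstCoolRound_le (u : V) (i : Fin k) :
    firstCoolRound G v u ≤ (i : ℕ) + 1 + G.dist (v i) u :=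
  Nat.sInf_le ⟨i, rfl⟩

lemma exists_firstCoolRound_eq (hk : 0 < k) (u : V) :
    ∃ i : Fin k, firstCoolRound G v u = (i : ℕ) + 1 + G.dist (v i) u :=
  Nat.sInf_mem (s := {m : ℕ | ∃ i : Fin k, m = (i : ℕ) + 1 + G.dist (v i) u})
    ⟨_, ⟨0, hk⟩, rfl⟩

lemma source_mem_cooledBy (i : Fin k) : v i ∈ cooledBy G v (i + 1) := by
  simpa [cooledBy] using firstCoolRound_le G v (v i) i

lemma exists_source_of_mem_union_nodeBorder_cooledBy (hk : 0 < k) {t : ℕ} {u : V}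
    (hu : u ∈ cooledBy G v t ∪ nodeBorder G (cooledBy G v t)) :
    ∃ i : Fin k, (i : ℕ) < t ∧ (i : ℕ) + 1 + G.dist (v i) u ≤ t + 1 := by
  rcases hu with hu | ⟨-, w, hw, hadj⟩
  · obtain ⟨i, hi⟩ := exists_firstCoolRound_eq G v hk u
    have hu : firstCoolRound G v u ≤ t := hu
    exact ⟨i, by omega, by omega⟩
  · obtain ⟨i, hi⟩ := exists_firstCoolRound_eq G v hk w
    have hw : firstCoolRound G v w ≤ t := hw
    have := hadj.dist_le_dist_add_one (v i)
    exact ⟨i, by omega, by omega⟩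

lemma union_nodeBorder_cooledBy_subset (hk : 0 < k) (t : ℕ) :
    cooledBy G v t ∪ nodeBorder G (cooledBy G v t) ⊆ cooledBy G v (t + 1) := fun u hu => by
  obtain ⟨i, -, hi⟩ := exists_source_of_mem_union_nodeBorder_cooledBy G v hk hu
  exact (firstCoolRound_le G v u i).trans hi

lemma source_notMem_union_nodeBorder_cooledBy (hc : IsCoolingSeq G v) (j : Fin k) :
    v j ∉ cooledBy G v j ∪ nodeBorder G (cooledBy G v j) := fun hj => by
  obtain ⟨i, hij, hi⟩ := exists_source_of_mem_union_nodeBorder_cooledBy G v j.pos hj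
  have := hc.1 i j hij
  omega

lemma ncard_union_nodeBorder_cooledBy_lt [Fintype V] (hc : IsCoolingSeq G v) (j : Fin k) :
    (cooledBy G v j ∪ nodeBorder G (cooledBy G v j)).ncard < (cooledBy G v (j + 1)).ncard :=
  ncard_lt_ncard <| (ssubset_iff_of_subset (union_nodeBorder_cooledBy_subset G v j.pos j)).mpr
    ⟨v j, source_mem_cooledBy G v j, source_notMem_union_nodeBorder_cooledBy G v hc j⟩

lemma coolXseq_le_ncard_cooledBy [Fintype V] (hc : IsCoolingSeq G v) :
    ∀ j < k, coolXseq G j ≤ (cooledBy G v (j + 1)).ncard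
  | 0, hk => (Nat.zero_le _).trans_lt (ncard_union_nodeBorder_cooledBy_lt G v hc ⟨0, hk⟩)
  | j + 1, hj => by
    have hx := coolXseq_le_ncard_cooledBy hc j (by omega)
    have hn : coolXseq G j ≤ Fintype.card V :=
      hx.trans ((ncard_le_card _).trans_eq Nat.card_eq_fintype_card)
    calc coolXseq G (j + 1) = coolXseq G j + phiV G (coolXseq G j) + 1 := by
          rw [coolXseq, min_eq_left hn]
      _ ≤ (cooledBy G v (j + 1) ∪ nodeBorder G (cooledBy G v (j + 1))).ncard + 1 := by
          gcongr; exact add_phiV_le_ncard_union_nodeBorder G hx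
      _ ≤ (cooledBy G v (j + 2)).ncard :=
          ncard_union_nodeBorder_cooledBy_lt G v hc ⟨j + 1, hj⟩

lemma firstCoolRound_le_of_isCoolingSeq (hc : IsCoolingSeq G v) (u : V) :
    firstCoolRound G v u ≤ k + 1 :=
  let ⟨i, hi⟩ := hc.2 u
  (firstCoolRound_le G v u i).trans hi

end Cooling

lemma lt_coolXseq {V : Type*} [Fintype V] (G : SimpleGraph V) : ∀ m, m < coolXseq G m
  | 0 => Nat.one_pos
  | m + 1 => by have := lt_coolXseq G m; rw [coolXseq]; omega

theorem coolingNumber_le_isoperimetric_general {V : Type*} [Fintype V] (G : SimpleGraph V) :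
    coolingNumber G ≤ sInf {i : ℕ | Fintype.card V ≤ coolXseq G i} + 1 := by
  refine csSup_le' ?_
  rintro _ ⟨k, v, hc, rfl⟩
  set I := sInf {i : ℕ | Fintype.card V ≤ coolXseq G i}
  have hI : Fintype.card V ≤ coolXseq G I :=
    Nat.sInf_mem (s := {i : ℕ | Fintype.card V ≤ coolXseq G i}) ⟨_, (lt_coolXseq G _).le⟩
  refine Finset.sup_le fun u _ => ?_
  show firstCoolRound G v u ≤ I + 1
  by_contra! hu
  have hIk : I < k := by have := firstCoolRound_le_of_isCoolingSeq G v hc u; omega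
  have hall : cooledBy G v (I + 1) = univ := by
    refine eq_of_subset_of_ncard_le (subset_univ _) ?_
    rw [ncard_univ, Nat.card_eq_fintype_card]
    exact hI.trans (coolXseq_le_ncard_cooledBy G v hc I hIk)
  exact hu.not_ge (hall ▸ mem_univ u : u ∈ cooledBy G v (I + 1))

/-- If `I` is the smallest (1-based) index with `x_I ≥ n`, then `CL(G) ≤ I`. -/
theorem coolingNumber_le_isoperimetric {V : Type*} [Fintype V] (G : SimpleGraph V)
    (hG : G.Connected) :
    coolingNumber G ≤ sInf {i : ℕ | Fintype.card V ≤ coolXseq G i} + 1 :=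
  coolingNumber_le_isoperimetric_general G
end

section
/- For every finite connected simple graph G, the burning number is at most the cooling number: b(G) ≤ CL(G). -/
/-- A burning sequence for `G`: a sequence of distinct sources, each unburned when chosen
(`dist (v i) (v j) > j - i` for `i < j`, 1-based), which burn every vertex of `G` within
`k` rounds (`dist (v i) u ≤ k - i` for some `i`, 1-based). -/
def IsBurningSeq {V : Type*} (G : SimpleGraph V) {k : ℕ} (v : Fin k → V) : Prop :=
  Function.Injective v ∧
  (∀ i j : Fin k, i < j → (j : ℕ) - (i : ℕ) < G.dist (v i) (v j)) ∧
  (∀ u : V, ∃ i : Fin k, G.dist (v i) u ≤ k - ((i : ℕ) + 1))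

/-- The burning number of `G`: the minimum length of a burning sequence. -/
noncomputable def burningNumber {V : Type*} [Fintype V] (G : SimpleGraph V) : ℕ :=
  sInf {k : ℕ | ∃ v : Fin k → V, IsBurningSeq G v}

/-- For every finite connected simple graph `G`, `b(G) ≤ CL(G)`. -/
theorem burningNumber_le_coolingNumber {V : Type*} [Fintype V] (G : SimpleGraph V)
    (hG : G.Connected) :
    burningNumber G ≤ coolingNumber G := by
  by_cases hB : {k : ℕ | ∃ v : Fin k → V, IsBurningSeq G v}.Nonempty
  case neg =>
    rw [Set.not_nonempty_iff_eq_empty] at hB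
    simp [burningNumber, hB]
  obtain ⟨m, w, hw⟩ := hB
  have hb : burningNumber G ≤ m := Nat.sInf_le ⟨w, hw⟩
  rcases Nat.eq_zero_or_pos m with rfl | hm
  · exact le_trans hb (Nat.zero_le _)
  obtain ⟨hinj, hgap, hcov⟩ := hw
  -- w is a cooling sequence
  have hcool : IsCoolingSeq G w := by
    refine ⟨hgap, fun u => ?_⟩
    obtain ⟨i, hi⟩ := hcov u
    exact ⟨i, by have := i.isLt; omega⟩
  -- coolTime ≥ m
  have hm' : m - 1 < m := by omega
  have hT : m ≤ coolTime G w := by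
    have hlast : m ≤ sInf {n : ℕ | ∃ i : Fin m,
        n = (i : ℕ) + 1 + G.dist (w i) (w ⟨m - 1, hm'⟩)} := by
      apply le_csInf
      · refine ⟨m - 1 + 1 + G.dist (w ⟨m - 1, hm'⟩) (w ⟨m - 1, hm'⟩),
          ⟨m - 1, hm'⟩, rfl⟩
      · rintro n ⟨i, rfl⟩
        rcases eq_or_lt_of_le (Nat.le_pred_of_lt i.isLt) with h | h
        · have hi : i = (⟨m - 1, hm'⟩ : Fin m) := Fin.ext h
          have hv : (i : ℕ) = m - 1 := h
          rw [hi, SimpleGraph.dist_self] at *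
          omega
        · have hd := hgap i ⟨m - 1, hm'⟩ h
          have hv : ((⟨m - 1, hm'⟩ : Fin m) : ℕ) = m - 1 := rfl
          rw [hv] at hd
          omega
    have hsup := Finset.le_sup (f := fun u : V =>
        sInf {n : ℕ | ∃ i : Fin m, n = (i : ℕ) + 1 + G.dist (w i) u})
      (Finset.mem_univ (w ⟨m - 1, hm'⟩))
    exact le_trans hlast hsup
  have hmem : coolTime G w ∈
      {T : ℕ | ∃ (k : ℕ) (v : Fin k → V), IsCoolingSeq G v ∧ T = coolTime G v} :=
    ⟨m, w, hcool, rfl⟩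
  have hbdd : BddAbove
      {T : ℕ | ∃ (k : ℕ) (v : Fin k → V), IsCoolingSeq G v ∧ T = coolTime G v} := by
    refine ⟨Fintype.card V + 1, ?_⟩
    rintro T ⟨k, v, ⟨hg, hc⟩, rfl⟩
    have hvinj : Function.Injective v := by
      intro i j hij
      by_contra hne
      rcases lt_or_gt_of_ne hne with h | h
      · have := hg i j h
        rw [hij, SimpleGraph.dist_self] at this
        omega
      · have := hg j i h
        rw [← hij, SimpleGraph.dist_self] at this
        omega
    have hk : k ≤ Fintype.card V := by
      simpa using Fintype.card_le_of_injective v hvinj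
    apply Finset.sup_le
    intro u _
    obtain ⟨i, hi⟩ := hc u
    exact le_trans (Nat.sInf_le ⟨i, rfl⟩) (by omega)
  exact hb.trans (hT.trans (le_csSup hbdd hmem))
end
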